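/- arXiv:1909.07119 — 4 statements merged into one kernel-verified Lean document; each statement's English description precedes it below -/
import Mathlib

section
/- Let γ : [a,b] → ℝ² be a continuous curve of finite turn and suppose that the image Im(γ) = γ([a,b]) is a Lipschitz graph. Then Im(γ) is a DC graph. -/
open Set
open scoped RealInnerProductSpace

/-- `M` is an `L`-Lipschitz graph in the direction of a unit vector `v`. -/
def IsLipschitzGraphInDir (L : ℝ) (v : EuclideanSpace ℝ (Fin 2))
    (M : Set (EuclideanSpace ℝ (Fin 2))) : Prop :=
  ∃ (K : Set (EuclideanSpace ℝ (Fin 2))) (f : EuclideanSpace ℝ (Fin 2) → ℝ),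
    IsClosed K ∧ Convex ℝ K ∧ (∀ t ∈ K, ⟪t, v⟫ = 0) ∧
    (∀ s ∈ K, ∀ t ∈ K, |f s - f t| ≤ L * ‖s - t‖) ∧
    M = (fun t => t + f t • v) '' K

/-- `M ⊆ ℝ²` is a DC graph: for some unit vector `v` and unit vector `w` spanning `v^⊥`,
there are a closed convex set `K ⊆ ℝ` (identifying `v^⊥` with `ℝ` via `w`) and a DC function
(a difference of two convex functions on an open interval containing `K`) whose graph over
`K` is `M`. -/
def IsDCGraph (M : Set (EuclideanSpace ℝ (Fin 2))) : Prop :=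
  ∃ v w : EuclideanSpace ℝ (Fin 2), ‖v‖ = 1 ∧ ‖w‖ = 1 ∧ ⟪v, w⟫ = 0 ∧
    ∃ K O : Set ℝ, IsClosed K ∧ Convex ℝ K ∧ IsOpen O ∧ Convex ℝ O ∧ K ⊆ O ∧
      ∃ g h : ℝ → ℝ, ConvexOn ℝ O g ∧ ConvexOn ℝ O h ∧
        M = (fun t => t • w + (g t - h t) • v) '' K

/-- The curve `γ : [a,b] → ℝ²` has finite turn: the sums of angles between consecutive
chords are bounded over all partitions of `[a,b]` for which these angles make sense. -/
def HasFiniteTurn (γ : ℝ → EuclideanSpace ℝ (Fin 2)) (a b : ℝ) : Prop :=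
  ∃ C : ℝ, ∀ (n : ℕ) (x : ℕ → ℝ), x 0 = a → x n = b →
    (∀ k < n, x k < x (k + 1)) → (∀ k < n, γ (x (k + 1)) ≠ γ (x k)) →
    ∑ k ∈ Finset.range (n - 1),
      InnerProductGeometry.angle
        (‖γ (x (k + 1)) - γ (x k)‖⁻¹ • (γ (x (k + 1)) - γ (x k)))
        (‖γ (x (k + 2)) - γ (x (k + 1))‖⁻¹ • (γ (x (k + 2)) - γ (x (k + 1)))) < C

/-!
Write the image as the graph `s ↦ s • w + F s • v` of an `L`-Lipschitz function `F` on `[c, d]`,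
extended to `ℝ` by constants. The chords of the graph over `[x, y]` and `[y, z]` point in the
directions `w + μ • v` and `w + μ' • v` of their slopes, so they meet at the angle
`|arctan μ - arctan μ'| ≥ (μ - μ') / (1 + L ^ 2)`. Let `φ` be the `w`-coordinate of `γ`: by the
intermediate value theorem the curve first reaches the graph points on either side of `φ a` in
monotone order. Cut at `c`, `φ a` and `d` (each cut costs at most two angles), a polygon through
increasing graph points thus consists of two polygons inscribed in `γ` and two straight pieces, and
the finite turn bounds the total decrease of the slopes of `F` along every such chain. A function
with this property is `(F + ∫ n) - ∫ n`, where `n x` is minus the largest slope decrease available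
to the right of `x`; `n` is monotone, so both terms are convex.
-/

open List Real InnerProductGeometry

namespace List

variable {α : Type*}

def tripleSum (f : α → α → α → ℝ) : List α → ℝ
  | x :: y :: z :: l => f x y z + tripleSum f (y :: z :: l)
  | _ => 0

variable {f : α → α → α → ℝ}

@[simp] theorem tripleSum_nil : tripleSum f [] = 0 := rfl

@[simp] theorem tripleSum_singleton (x : α) : tripleSum f [x] = 0 := rfl

@[simp] theorem tripleSum_pair (x y : α) : tripleSum f [x, y] = 0 := rfl

@[simp] theorem tripleSum_cons_cons_cons (x y z : α) (l : List α) :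
    tripleSum f (x :: y :: z :: l) = f x y z + tripleSum f (y :: z :: l) := rfl

theorem tripleSum_nonneg (hf : ∀ x y z, 0 ≤ f x y z) : ∀ l, 0 ≤ tripleSum f l
  | x :: y :: z :: l => add_nonneg (hf x y z) (tripleSum_nonneg hf (y :: z :: l))
  | [] | [_] | [_, _] => le_rfl

theorem tripleSum_le_cons (hf : ∀ x y z, 0 ≤ f x y z) (x : α) :
    ∀ l, tripleSum f l ≤ tripleSum f (x :: l)
  | y :: z :: _ => le_add_of_nonneg_left (hf x y z)
  | [] | [_] => le_rfl

theorem tripleSum_le_append (hf : ∀ x y z, 0 ≤ f x y z) (l₂ : List α) :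
    ∀ l₁, tripleSum f l₁ ≤ tripleSum f (l₁ ++ l₂)
  | x :: y :: z :: l => by
    simpa using add_le_add_left (tripleSum_le_append hf l₂ (y :: z :: l)) (f x y z)
  | [] | [_] | [_, _] => tripleSum_nonneg hf _

theorem tripleSum_cons_le {M : ℝ} (hM : 0 ≤ M) (hf : ∀ x y z, f x y z ≤ M) (x : α) :
    ∀ l, tripleSum f (x :: l) ≤ tripleSum f l + M
  | y :: z :: l => by simpa [add_comm] using hf x y z
  | [] | [_] => by simpa using hM

theorem tripleSum_append_le {M : ℝ} (hM : 0 ≤ M) (hf : ∀ x y z, f x y z ≤ M) (l₂ : List α) :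
    ∀ l₁, tripleSum f (l₁ ++ l₂) ≤ tripleSum f l₁ + tripleSum f l₂ + 2 * M
  | x :: y :: z :: l => by
    have := tripleSum_append_le hM hf l₂ (y :: z :: l)
    simp only [cons_append, tripleSum_cons_cons_cons] at this ⊢
    linarith
  | [] => by rw [nil_append, tripleSum_nil]; linarith
  | [x] => by simpa using (tripleSum_cons_le hM hf x l₂).trans (by linarith)
  | [x, y] => by
    match l₂ with
    | z :: l₂ =>
      have := tripleSum_cons_le hM hf y (z :: l₂)
      simp only [cons_append, nil_append, tripleSum_cons_cons_cons, tripleSum_pair]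
      linarith [hf x y z]
    | [] => rw [append_nil, tripleSum_pair, tripleSum_nil]; linarith

theorem tripleSum_le_tripleSum {g : α → α → α → ℝ} {R : α → α → Prop}
    (h : ∀ x y z, R x y → R y z → f x y z ≤ g x y z) : ∀ {l}, l.IsChain R →
    tripleSum f l ≤ tripleSum g l
  | x :: y :: z :: l, hl => by
    rw [isChain_cons_cons, isChain_cons_cons] at hl
    exact add_le_add (h x y z hl.1 hl.2.1) (tripleSum_le_tripleSum h (isChain_cons_cons.2 hl.2))
  | [], _ | [_], _ | [_, _], _ => le_rfl

theorem tripleSum_eq_zero {R : α → α → Prop} (h : ∀ x y z, R x y → R y z → f x y z = 0) :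
    ∀ {l}, l.IsChain R → tripleSum f l = 0
  | x :: y :: z :: l, hl => by
    rw [isChain_cons_cons, isChain_cons_cons] at hl
    rw [tripleSum_cons_cons_cons, h x y z hl.1 hl.2.1,
      tripleSum_eq_zero h (isChain_cons_cons.2 hl.2), add_zero]
  | [], _ | [_], _ | [_, _], _ => rfl

theorem tripleSum_map {β : Type*} (g : β → α) :
    ∀ l, tripleSum f (l.map g) = tripleSum (fun x y z => f (g x) (g y) (g z)) l
  | x :: y :: z :: l => by
    rw [map_cons, map_cons, map_cons, tripleSum_cons_cons_cons, ← map_cons, ← map_cons,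
      tripleSum_map g (y :: z :: l), tripleSum_cons_cons_cons]
  | [] | [_] | [_, _] => rfl

theorem tripleSum_const_mul (c : ℝ) :
    ∀ l, tripleSum (fun x y z => c * f x y z) l = c * tripleSum f l
  | x :: y :: z :: l => by simp [tripleSum_const_mul c (y :: z :: l), mul_add]
  | [] | [_] | [_, _] => by simp

theorem tripleSum_append_pair (x y z : α) :
    ∀ l, tripleSum f (l ++ [x, y, z]) = tripleSum f (l ++ [x, y]) + f x y z
  | [] => by simp
  | [a] => by simp [add_comm]
  | a :: b :: l => by
    have := tripleSum_append_pair x y z (b :: l)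
    match l, this with
    | [], h =>
      simp only [cons_append, nil_append, tripleSum_cons_cons_cons, tripleSum_pair, add_zero] at h ⊢
      linarith
    | c :: l, h =>
      simp only [cons_append, tripleSum_cons_cons_cons] at h ⊢
      linarith

theorem tripleSum_reverse : ∀ l : List α,
    tripleSum f l.reverse = tripleSum (fun x y z => f z y x) l
  | x :: y :: z :: l => by
    have := tripleSum_reverse (y :: z :: l)
    simp only [reverse_cons, append_assoc, cons_append, nil_append] at this ⊢
    rw [tripleSum_append_pair, this, tripleSum_cons_cons_cons, add_comm]
  | [] | [_] | [_, _] => by simp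

theorem tripleSum_eq_sum_range (d : α) : ∀ l : List α,
    tripleSum f l = ∑ k ∈ Finset.range (l.length - 2),
      f (l.getD k d) (l.getD (k + 1) d) (l.getD (k + 2) d)
  | x :: y :: z :: l => by
    rw [tripleSum_cons_cons_cons, tripleSum_eq_sum_range d (y :: z :: l)]
    simp only [length_cons, show l.length + 1 + 1 + 1 - 2 = l.length + 1 by omega,
      show l.length + 1 + 1 - 2 = l.length by omega, Finset.sum_range_succ', getD_cons_succ,
      getD_cons_zero]
    ring
  | [] | [_] | [_, _] => by simp

theorem IsChain.filter_le_append_filter_lt {α : Type*} [LinearOrder α] {l : List α}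
    (hl : l.IsChain (· < ·)) (r : α) : l.filter (· ≤ r) ++ l.filter (r < ·) = l := by
  induction l with
  | nil => rfl
  | cons x l ih =>
    have hl' := isChain_iff_pairwise.1 hl
    rw [pairwise_cons] at hl'
    by_cases hx : x ≤ r
    · simp [hx, ih (isChain_iff_pairwise.2 hl'.2)]
    · have hlr : ∀ y ∈ l, r < y := fun y hy => (not_le.1 hx).trans (hl'.1 y hy)
      rw [filter_cons_of_neg (by simpa using hx), filter_cons_of_pos (by simpa using hx),
        filter_eq_nil_iff.2 fun y hy => by simpa using hlr y hy,
        filter_eq_self.2 fun y hy => by simpa using hlr y hy, nil_append]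

end List

theorem slope_eq_sum_slope_div (g : ℝ → ℝ) (x y : ℝ) {N : ℕ} (hN : N ≠ 0) :
    slope g x y = (∑ i ∈ Finset.range N,
      slope g (x + i * ((y - x) / N)) (x + (i + 1) * ((y - x) / N))) / N := by
  have hstep : ∀ i : ℕ, slope g (x + i * ((y - x) / N)) (x + (i + 1) * ((y - x) / N)) =
      (g (x + (i + 1 : ℕ) * ((y - x) / N)) - g (x + i * ((y - x) / N))) / ((y - x) / N) := by
    intro i
    rw [slope_def_field]
    push_cast
    ring_nf
  simp_rw [hstep, ← Finset.sum_div]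
  rw [Finset.sum_range_sub (fun i : ℕ => g (x + i * ((y - x) / N))), slope_def_field]
  have hN' : (N : ℝ) ≠ 0 := Nat.cast_ne_zero.2 hN
  rw [Nat.cast_zero, zero_mul, add_zero, div_div, div_mul_cancel₀ _ hN',
    mul_div_cancel₀ _ hN', add_sub_cancel]

theorem add_mul_div_mem_Icc {x y : ℝ} (hxy : x ≤ y) {N i : ℕ} (hi : i ≤ N) :
    x + i * ((y - x) / N) ∈ Icc x y := by
  rcases Nat.eq_zero_or_pos N with rfl | hN
  · simp [hxy]
  have hiN : (i : ℝ) / N ≤ 1 := div_le_one_of_le₀ (by exact_mod_cast hi) (by positivity)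
  have hi0 : 0 ≤ (i : ℝ) / N := by positivity
  rw [show (i : ℝ) * ((y - x) / N) = (i / N) * (y - x) by ring]
  constructor <;> nlinarith

theorem add_mul_div_lt {x y : ℝ} (hxy : x < y) {N i : ℕ} (hi : i < N) :
    x + i * ((y - x) / N) < y := by
  have hN : (0 : ℝ) < N := by exact_mod_cast (Nat.zero_le i).trans_lt hi
  have hiN : (i : ℝ) / N < 1 := (div_lt_one hN).2 (by exact_mod_cast hi)
  rw [show (i : ℝ) * ((y - x) / N) = (i / N) * (y - x) by ring]
  nlinarith

/-- Average the hypothesis over the uniform subdivisions of `[x, y]` and `[y, z]` into `N` pieces,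
pairing the `i`-th pieces: the errors telescope. -/
theorem slope_le_slope_add_sub_div {s : Set ℝ} {g n : ℝ → ℝ} (hs : Convex ℝ s)
    (h : ∀ u ∈ s, ∀ q ∈ s, ∀ v p, u < v → v < p → p < q →
      slope g u v ≤ slope g p q + (n v - n u) + (n q - n p))
    {x y z : ℝ} (hx : x ∈ s) (hz : z ∈ s) (hxy : x < y) (hyz : y < z) {N : ℕ} (hN2 : 2 ≤ N) :
    slope g x y ≤ slope g y z + (n z - n x) / N := by
  have hN : 0 < N := by omega
  have hsub : Icc x z ⊆ s := hs.ordConnected.out hx hz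
  set t : ℕ → ℝ := fun i => x + i * ((y - x) / N)
  set r : ℕ → ℝ := fun i => y + i * ((z - y) / N)
  have ht : ∀ i ≤ N, t i ∈ Icc x y := fun i hi => add_mul_div_mem_Icc hxy.le hi
  have hr : ∀ i ≤ N, r i ∈ Icc y z := fun i hi => add_mul_div_mem_Icc hyz.le hi
  have hδ : ∀ {a b : ℝ}, a < b → ∀ i : ℕ, a + i * ((b - a) / N) < a + (i + 1) * ((b - a) / N) :=
    fun hab i => by nlinarith [div_pos (sub_pos.2 hab) (Nat.cast_pos.2 hN)]
  have hterm : ∀ i ∈ Finset.range N, slope g (t i) (t (i + 1)) ≤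
      slope g (r i) (r (i + 1)) + (n (t (i + 1)) - n (t i)) + (n (r (i + 1)) - n (r i)) := by
    intro i hi
    have hi : i < N := Finset.mem_range.1 hi
    refine h _ (hsub ⟨(ht i hi.le).1, (ht i hi.le).2.trans hyz.le⟩) _
      (hsub ⟨hxy.le.trans (hr (i + 1) hi).1, (hr (i + 1) hi).2⟩) _ _ ?_ ?_ ?_
    · simpa [t] using hδ hxy i
    · rcases (Nat.succ_le_of_lt hi).lt_or_eq with hi' | hi'
      · exact (add_mul_div_lt hxy hi').trans_le (hr i hi.le).1
      · refine (ht (i + 1) hi).2.trans_lt (lt_add_of_pos_right y ?_)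
        have : 0 < i := by omega
        have := div_pos (sub_pos.2 hyz) (Nat.cast_pos.2 hN)
        positivity
    · simpa [r] using hδ hyz i
  have hN' : (N : ℝ) ≠ 0 := Nat.cast_ne_zero.2 hN.ne'
  have htel : ∀ a b : ℝ, ∑ i ∈ Finset.range N,
      (n (a + (i + 1 : ℕ) * ((b - a) / N)) - n (a + i * ((b - a) / N))) = n b - n a := by
    intro a b
    rw [Finset.sum_range_sub (fun i : ℕ => n (a + i * ((b - a) / N))), Nat.cast_zero, zero_mul,
      add_zero, mul_div_cancel₀ _ hN', add_sub_cancel]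
  have hsum := Finset.sum_le_sum hterm
  simp only [Finset.sum_add_distrib, t, r, htel] at hsum
  push_cast at hsum
  rw [slope_eq_sum_slope_div g x y hN.ne', slope_eq_sum_slope_div g y z hN.ne', ← add_div]
  exact div_le_div_of_nonneg_right (by linarith) (Nat.cast_nonneg N)

theorem convexOn_of_slope_le_slope_add {s : Set ℝ} {g n : ℝ → ℝ} (hs : Convex ℝ s)
    (h : ∀ u ∈ s, ∀ q ∈ s, ∀ v p, u < v → v < p → p < q →
      slope g u v ≤ slope g p q + (n v - n u) + (n q - n p)) : ConvexOn ℝ s g := by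
  refine convexOn_of_slope_mono_adjacent hs fun {x y z} hx hz hxy hyz => ?_
  rw [← slope_def_field, ← slope_def_field]
  have hlim := (tendsto_const_div_atTop_nhds_zero_nat (n z - n x)).const_add (slope g y z)
  rw [add_zero] at hlim
  exact ge_of_tendsto hlim (Filter.eventually_atTop.2
    ⟨2, fun N hN => slope_le_slope_add_sub_div hs h hx hz hxy hyz hN⟩)

theorem MonotoneOn.slope_primitive_mem_Icc {n : ℝ → ℝ} {c d : ℝ} (hn : MonotoneOn n (Icc c d))
    {u v : ℝ} (hu : u ∈ Icc c d) (hv : v ∈ Icc c d) (huv : u < v) :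
    slope (fun x => ∫ t in c..x, n t) u v ∈ Icc (n u) (n v) := by
  have hint : ∀ {x y}, x ∈ Icc c d → y ∈ Icc c d → IntervalIntegrable n MeasureTheory.volume x y :=
    fun hx hy => (hn.mono (uIcc_subset_Icc hx hy)).intervalIntegrable
  have hc : c ∈ Icc c d := ⟨le_rfl, hu.1.trans hu.2⟩
  rw [slope_def_field, intervalIntegral.integral_interval_sub_left (hint hc hv) (hint hc hu),
    mem_Icc, le_div_iff₀ (sub_pos.2 huv), div_le_iff₀ (sub_pos.2 huv)]
  have hsub : Icc u v ⊆ Icc c d := Icc_subset_Icc hu.1 hv.2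
  constructor
  · have := intervalIntegral.integral_mono_on huv.le intervalIntegrable_const (hint hu hv)
      fun t ht => hn (hsub ⟨le_rfl, huv.le⟩) (hsub ht) ht.1
    simpa [mul_comm] using this
  · have := intervalIntegral.integral_mono_on huv.le (hint hu hv) intervalIntegrable_const
      fun t ht => hn (hsub ht) (hsub ⟨huv.le, le_rfl⟩) ht.2
    simpa [mul_comm] using this

theorem MonotoneOn.convexOn_primitive {n : ℝ → ℝ} {c d : ℝ} (hn : MonotoneOn n (Icc c d)) :
    ConvexOn ℝ (Icc c d) fun x => ∫ t in c..x, n t := by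
  refine convexOn_of_slope_mono_adjacent (convex_Icc c d) fun {x y z} hx hz hxy hyz => ?_
  have hy : y ∈ Icc c d := ⟨hx.1.trans hxy.le, hyz.le.trans hz.2⟩
  have h := (hn.slope_primitive_mem_Icc hx hy hxy).2.trans (hn.slope_primitive_mem_Icc hy hz hyz).1
  simpa only [slope_def_field] using h

noncomputable def downwardSlopeVariation (G : ℝ → ℝ) : List ℝ → ℝ :=
  tripleSum fun x y z => max (slope G x y - slope G y z) 0

noncomputable def downwardSlopeVariationOn (G : ℝ → ℝ) (s : Set ℝ) : ℝ :=
  sSup (downwardSlopeVariation G '' {l | l.IsChain (· < ·) ∧ ∀ x ∈ l, x ∈ s})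

section DownwardSlopeVariation

variable {G : ℝ → ℝ}

theorem downwardSlopeVariation_le_cons (x : ℝ) (l : List ℝ) :
    downwardSlopeVariation G l ≤ downwardSlopeVariation G (x :: l) :=
  tripleSum_le_cons (fun _ _ _ => le_max_right _ _) x l

theorem sub_slope_add_downwardSlopeVariation_le (u v p q : ℝ) (l : List ℝ) :
    slope G u v - slope G p q + downwardSlopeVariation G (q :: l) ≤
      downwardSlopeVariation G (u :: v :: p :: q :: l) := by
  have := downwardSlopeVariation_le_cons (G := G) p (q :: l)
  have h₁ := le_max_left (slope G u v - slope G v p) 0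
  have h₂ := le_max_left (slope G v p - slope G p q) 0
  simp only [downwardSlopeVariation, tripleSum_cons_cons_cons] at this ⊢
  linarith

theorem exists_cons_downwardSlopeVariation_ge {q d : ℝ} {l : List ℝ} (hl : l.IsChain (· < ·))
    (hlq : ∀ x ∈ l, x ∈ Icc q d) :
    ∃ r : List ℝ, (q :: r).IsChain (· < ·) ∧ (∀ x ∈ r, x ∈ Icc q d) ∧
      downwardSlopeVariation G l ≤ downwardSlopeVariation G (q :: r) := by
  match l, hl, hlq with
  | [], _, _ => exact ⟨[], by simp, by simp, le_rfl⟩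
  | x :: r, hl, hlq =>
    rcases (hlq x mem_cons_self).1.eq_or_lt with rfl | hqx
    · exact ⟨r, hl, fun y hy => hlq y (mem_cons_of_mem _ hy), le_rfl⟩
    · exact ⟨x :: r, isChain_cons_cons.2 ⟨hqx, hl⟩, hlq, downwardSlopeVariation_le_cons q _⟩

variable {c d C : ℝ}
  (hC : ∀ l : List ℝ, l.IsChain (· < ·) → (∀ x ∈ l, x ∈ Icc c d) →
    downwardSlopeVariation G l ≤ C)
include hC

theorem bddAbove_downwardSlopeVariation {s : Set ℝ} (hs : s ⊆ Icc c d) :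
    BddAbove (downwardSlopeVariation G '' {l | l.IsChain (· < ·) ∧ ∀ x ∈ l, x ∈ s}) :=
  ⟨C, forall_mem_image.2 fun l hl => hC l hl.1 fun x hx => hs (hl.2 x hx)⟩

theorem downwardSlopeVariation_le_downwardSlopeVariationOn {s : Set ℝ} (hs : s ⊆ Icc c d)
    {l : List ℝ} (hl : l.IsChain (· < ·)) (hls : ∀ x ∈ l, x ∈ s) :
    downwardSlopeVariation G l ≤ downwardSlopeVariationOn G s :=
  le_csSup (bddAbove_downwardSlopeVariation hC hs) (mem_image_of_mem _ ⟨hl, hls⟩)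

theorem downwardSlopeVariationOn_mono {s t : Set ℝ} (hst : s ⊆ t) (ht : t ⊆ Icc c d) :
    downwardSlopeVariationOn G s ≤ downwardSlopeVariationOn G t :=
  csSup_le_csSup (bddAbove_downwardSlopeVariation hC ht) ⟨0, [], ⟨List.IsChain.nil, by simp⟩, rfl⟩
    (image_mono fun _ hl => ⟨hl.1, fun x hx => hst (hl.2 x hx)⟩)

theorem downwardSlopeVariationOn_Icc_add_le {u v p q : ℝ} (hu : c ≤ u) (huv : u < v)
    (hvp : v < p) (hpq : p < q) (hq : q ≤ d) :
    downwardSlopeVariationOn G (Icc q d) + (slope G u v - slope G p q) ≤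
      downwardSlopeVariationOn G (Icc u d) := by
  rw [← le_sub_iff_add_le]
  refine csSup_le ⟨0, [], ⟨List.IsChain.nil, by simp⟩, rfl⟩ (forall_mem_image.2 fun l hl => ?_)
  obtain ⟨r, hr, hrq, hlr⟩ := exists_cons_downwardSlopeVariation_ge (G := G) hl.1 hl.2
  have hchain : (u :: v :: p :: q :: r).IsChain (· < ·) :=
    isChain_cons_cons.2 ⟨huv, isChain_cons_cons.2 ⟨hvp, isChain_cons_cons.2 ⟨hpq, hr⟩⟩⟩
  have hmem : ∀ x ∈ u :: v :: p :: q :: r, x ∈ Icc u d := by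
    simp only [forall_mem_cons]
    refine ⟨⟨le_rfl, by linarith⟩, ⟨huv.le, by linarith⟩, ⟨by linarith, by linarith⟩,
      ⟨by linarith, hq⟩, fun x hx => ⟨by linarith [(hrq x hx).1], (hrq x hx).2⟩⟩
  have := downwardSlopeVariation_le_downwardSlopeVariationOn hC (Icc_subset_Icc_left hu) hchain hmem
  linarith [sub_slope_add_downwardSlopeVariation_le (G := G) u v p q r]

/-- The decomposition is `G = (G + ∫ n) - ∫ n` with the monotone function
`n x = -downwardSlopeVariationOn G (Icc x d)`. -/
theorem exists_convexOn_sub_eq_of_downwardSlopeVariation_le :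
    ∃ g h : ℝ → ℝ, ConvexOn ℝ (Icc c d) g ∧ ConvexOn ℝ (Icc c d) h ∧ g - h = G := by
  set n : ℝ → ℝ := fun x => -downwardSlopeVariationOn G (Icc x d)
  have hn : MonotoneOn n (Icc c d) := fun x hx y _ hxy =>
    neg_le_neg (downwardSlopeVariationOn_mono hC (Icc_subset_Icc_left hxy)
      (Icc_subset_Icc_left hx.1))
  set H : ℝ → ℝ := fun x => ∫ t in c..x, n t
  refine ⟨G + H, H, convexOn_of_slope_le_slope_add (n := n) (convex_Icc c d) ?_,
    hn.convexOn_primitive, add_sub_cancel_right G H⟩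
  intro u hu q hq v p huv hvp hpq
  have hv : v ∈ Icc c d := ⟨hu.1.trans huv.le, (hvp.trans hpq).le.trans hq.2⟩
  have hp : p ∈ Icc c d := ⟨hv.1.trans hvp.le, hpq.le.trans hq.2⟩
  have hkey := downwardSlopeVariationOn_Icc_add_le hC hu.1 huv hvp hpq hq.2
  have hHuv := (hn.slope_primitive_mem_Icc hu hv huv).2
  have hHpq := (hn.slope_primitive_mem_Icc hp hq hpq).1
  simp only [slope_def_field, Pi.add_apply] at hkey hHuv hHpq ⊢
  rw [add_sub_add_comm, add_div, add_sub_add_comm, add_div]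
  linarith

end DownwardSlopeVariation

theorem abs_sub_le_mul_abs_arctan_sub {L μ μ' : ℝ} (hμ : |μ| ≤ L) (hμ' : |μ'| ≤ L) :
    |μ - μ'| ≤ (1 + L ^ 2) * |arctan μ - arctan μ'| := by
  wlog h : μ' ≤ μ generalizing μ μ'
  · rw [abs_sub_comm, abs_sub_comm (arctan μ)]
    exact this hμ' hμ (le_of_not_ge h)
  have hderiv : ∀ x ∈ interior (Icc (-L) L), 1 / (1 + L ^ 2) ≤ deriv arctan x := by
    intro x hx
    rw [interior_Icc] at hx
    rw [Real.deriv_arctan]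
    exact one_div_le_one_div_of_le (by positivity)
      (add_le_add_right (sq_le_sq' hx.1.le hx.2.le) 1)
  have hmvt := (convex_Icc (-L) L).mul_sub_le_image_sub_of_le_deriv
    continuous_arctan.continuousOn differentiable_arctan.differentiableOn hderiv
    μ' (abs_le.1 hμ') μ (abs_le.1 hμ) h
  rw [abs_of_nonneg (sub_nonneg.2 h), abs_of_nonneg (sub_nonneg.2 (arctan_strictMono.monotone h))]
  rw [one_div_mul_eq_div, div_le_iff₀ (by positivity)] at hmvt
  linarith

noncomputable def firstHit (φ : ℝ → ℝ) (a b s : ℝ) : ℝ := sInf (Icc a b ∩ φ ⁻¹' {s})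

section FirstHit

variable {φ : ℝ → ℝ} {a b s s' : ℝ}

theorem firstHit_le {t : ℝ} (ht : t ∈ Icc a b) (hφt : φ t = s) : firstHit φ a b s ≤ t :=
  csInf_le ⟨a, fun _ hx => hx.1.1⟩ ⟨ht, hφt⟩

variable (hφ : ContinuousOn φ (Icc a b))
include hφ

theorem firstHit_mem (hs : s ∈ φ '' Icc a b) : firstHit φ a b s ∈ Icc a b ∩ φ ⁻¹' {s} := by
  have hclosed := hφ.preimage_isClosed_of_isClosed isClosed_Icc (isClosed_singleton (x := s))
  obtain ⟨t, ht, hφt⟩ := hs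
  exact (isCompact_Icc.of_isClosed_subset hclosed inter_subset_left).sInf_mem ⟨t, ht, hφt⟩

theorem firstHit_lt_firstHit (hs : φ a ≤ s) (hss' : s < s') (hs' : s' ∈ φ '' Icc a b) :
    firstHit φ a b s < firstHit φ a b s' := by
  obtain ⟨⟨hTa, hTb⟩, hT⟩ := firstHit_mem hφ hs'
  obtain ⟨t, ht, hφt⟩ := intermediate_value_Icc hTa (hφ.mono (Icc_subset_Icc_right hTb))
    ⟨hs, hT.symm ▸ hss'.le⟩
  have hle := (firstHit_le ⟨ht.1, ht.2.trans hTb⟩ hφt).trans ht.2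
  refine hle.lt_of_ne fun h => hss'.ne ?_
  have := (firstHit_mem hφ ⟨t, ⟨ht.1, ht.2.trans hTb⟩, hφt⟩).2
  rw [h] at this
  exact this.symm.trans hT

theorem firstHit_lt_firstHit_of_lt (hs : s ≤ φ a) (hs's : s' < s) (hs' : s' ∈ φ '' Icc a b) :
    firstHit φ a b s < firstHit φ a b s' := by
  have hneg : ∀ r, firstHit (fun t => -φ t) a b (-r) = firstHit φ a b r := fun r => by
    simp [firstHit, preimage, neg_inj]
  rw [← hneg, ← hneg]
  refine firstHit_lt_firstHit hφ.neg (neg_le_neg hs) (neg_lt_neg hs's) ?_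
  obtain ⟨t, ht, rfl⟩ := hs'
  exact ⟨t, ht, rfl⟩

end FirstHit

section InnerProductSpace

variable {E : Type*} [NormedAddCommGroup E] [InnerProductSpace ℝ E]

noncomputable def turnSum : List E → ℝ :=
  tripleSum fun x y z => angle (y - x) (z - y)

theorem turnSum_le_cons (x : E) (l : List E) : turnSum l ≤ turnSum (x :: l) :=
  tripleSum_le_cons (fun _ _ _ => angle_nonneg _ _) x l

theorem turnSum_le_append (l₁ l₂ : List E) : turnSum l₁ ≤ turnSum (l₁ ++ l₂) :=
  tripleSum_le_append (fun _ _ _ => angle_nonneg _ _) l₂ l₁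

theorem turnSum_append_le (l₁ l₂ : List E) :
    turnSum (l₁ ++ l₂) ≤ turnSum l₁ + turnSum l₂ + 2 * π :=
  tripleSum_append_le pi_pos.le (fun _ _ _ => angle_le_pi _ _) l₂ l₁

theorem turnSum_reverse (l : List E) : turnSum l.reverse = turnSum l := by
  rw [turnSum, tripleSum_reverse]
  congr 1
  funext x y z
  rw [← neg_sub z y, ← neg_sub y x, angle_neg_neg, angle_comm]

theorem angle_inv_norm_smul_inv_norm_smul (u w : E) :
    angle (‖u‖⁻¹ • u) (‖w‖⁻¹ • w) = angle u w := by
  rcases eq_or_ne u 0 with rfl | hu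
  · simp
  rcases eq_or_ne w 0 with rfl | hw
  · simp
  rw [angle_smul_left_of_pos _ _ (inv_pos.2 (norm_pos_iff.2 hu)),
    angle_smul_right_of_pos _ _ (inv_pos.2 (norm_pos_iff.2 hw))]

section Extension

variable {γ : ℝ → E} {a b : ℝ} {ts : List ℝ}

theorem exists_cons_turnSum_ge (hlen : 2 ≤ ts.length) (hts : ts.IsChain (· < ·))
    (hmem : ∀ t ∈ ts, t ∈ Icc a b) (hne : ts.IsChain (γ · ≠ γ ·)) :
    ∃ r, (a :: r).IsChain (· < ·) ∧ (∀ t ∈ a :: r, t ∈ Icc a b) ∧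
      (a :: r).IsChain (γ · ≠ γ ·) ∧ r.getLast? = ts.getLast? ∧
      turnSum (ts.map γ) ≤ turnSum ((a :: r).map γ) := by
  match ts, hlen, hts, hmem, hne with
  | t₀ :: t₁ :: l, _, hts, hmem, hne =>
    rw [isChain_cons_cons] at hts hne
    have hat₀ : a ≤ t₀ := (hmem t₀ mem_cons_self).1
    have hab : a ∈ Icc a b := ⟨le_rfl, hat₀.trans (hmem t₀ mem_cons_self).2⟩
    by_cases hγ : γ a = γ t₀
    · refine ⟨t₁ :: l, isChain_cons_cons.2 ⟨hat₀.trans_lt hts.1, hts.2⟩, ?_,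
        isChain_cons_cons.2 ⟨hγ ▸ hne.1, hne.2⟩, getLast?_cons_cons.symm, by simp [hγ]⟩
      rintro t (_ | ⟨_, ht⟩)
      exacts [hab, hmem t (mem_cons_of_mem _ ht)]
    · have hat₀' : a < t₀ := hat₀.lt_of_ne fun h => hγ (h ▸ rfl)
      refine ⟨t₀ :: t₁ :: l, isChain_cons_cons.2 ⟨hat₀', isChain_cons_cons.2 hts⟩, ?_,
        isChain_cons_cons.2 ⟨hγ, isChain_cons_cons.2 hne⟩, rfl, turnSum_le_cons _ _⟩
      rintro t (_ | ⟨_, ht⟩)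
      exacts [hab, hmem t ht]

theorem exists_append_turnSum_ge (hlen : 2 ≤ ts.length) (hts : ts.IsChain (· < ·))
    (hmem : ∀ t ∈ ts, t ∈ Icc a b) (hne : ts.IsChain (γ · ≠ γ ·)) :
    ∃ r, (r ++ [b]).IsChain (· < ·) ∧ (∀ t ∈ r ++ [b], t ∈ Icc a b) ∧
      (r ++ [b]).IsChain (γ · ≠ γ ·) ∧ r.head? = ts.head? ∧
      turnSum (ts.map γ) ≤ turnSum ((r ++ [b]).map γ) := by
  obtain ⟨l, s, t, rfl⟩ : ∃ l s t, ts = l ++ [s, t] := by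
    rcases ts.eq_nil_or_concat' with rfl | ⟨L, t, rfl⟩
    · simp at hlen
    rcases L.eq_nil_or_concat' with rfl | ⟨l, s, rfl⟩
    · simp at hlen
    exact ⟨l, s, t, by simp⟩
  rw [isChain_append_cons_cons] at hts hne
  simp only [forall_mem_append, forall_mem_cons] at hmem
  obtain ⟨hl, hs, ht, -⟩ := hmem
  have hbb : b ∈ Icc a b := ⟨ht.1.trans ht.2, le_rfl⟩
  by_cases hγ : γ b = γ t
  · refine ⟨l ++ [s], by simpa using ⟨hts.1, hts.2.1.trans_le ht.2⟩, ?_,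
      by simpa [hγ] using ⟨hne.1, hne.2.1⟩, by simp, by simp [hγ]⟩
    simp only [forall_mem_append, forall_mem_cons]
    exact ⟨⟨hl, hs, by simp⟩, hbb, by simp⟩
  · have htb : t < b := ht.2.lt_of_ne fun h => hγ (h ▸ rfl)
    refine ⟨l ++ [s, t], by simpa using ⟨hts.1, hts.2.1, htb⟩, ?_,
      by simpa using ⟨hne.1, hne.2.1, Ne.symm hγ⟩, rfl,
      by simpa using turnSum_le_append ((l ++ [s, t]).map γ) [γ b]⟩
    simp only [forall_mem_append, forall_mem_cons]
    exact ⟨⟨hl, hs, ht, by simp⟩, hbb, by simp⟩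
end Extension

theorem angle_add_smul_add_smul {v w : E} (hv : ‖v‖ = 1) (hw : ‖w‖ = 1) (hvw : ⟪v, w⟫ = 0)
    (μ μ' : ℝ) : angle (w + μ • v) (w + μ' • v) = |arctan μ - arctan μ'| := by
  have hwv : ⟪w, v⟫ = 0 := by rw [real_inner_comm, hvw]
  have hinner : ⟪w + μ • v, w + μ' • v⟫ = 1 + μ * μ' := by
    simp only [inner_add_left, inner_add_right, real_inner_smul_left, real_inner_smul_right,
      real_inner_self_eq_norm_sq, hv, hw, hvw, hwv]
    ring
  have hnorm : ∀ μ : ℝ, ‖w + μ • v‖ = √(1 + μ ^ 2) := by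
    intro μ
    rw [← sqrt_sq (norm_nonneg _), norm_add_sq_real, real_inner_smul_right, hwv, norm_smul, hv,
      hw, norm_eq_abs, mul_one, sq_abs]
    ring_nf
  have hcos : cos (arctan μ - arctan μ') = (1 + μ * μ') / (√(1 + μ ^ 2) * √(1 + μ' ^ 2)) := by
    rw [cos_sub, cos_arctan, cos_arctan, sin_arctan, sin_arctan]
    field_simp
  have hle : |arctan μ - arctan μ'| ≤ π := by
    rw [abs_le]
    constructor <;> linarith [arctan_lt_pi_div_two μ, neg_pi_div_two_lt_arctan μ,
      arctan_lt_pi_div_two μ', neg_pi_div_two_lt_arctan μ']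
  rw [angle, hinner, hnorm, hnorm, ← hcos, ← cos_abs, arccos_cos (abs_nonneg _) hle]

noncomputable def graphPoint (w v : E) (F : ℝ → ℝ) (s : ℝ) : E := s • w + F s • v

theorem graphPoint_sub_graphPoint (w v : E) (F : ℝ → ℝ) (p q : ℝ) :
    graphPoint w v F q - graphPoint w v F p = (q - p) • (w + slope F p q • v) := by
  rcases eq_or_ne p q with rfl | hpq
  · simp
  rw [slope_def_field, smul_add, smul_smul, mul_div_cancel₀ _ (sub_ne_zero.2 hpq.symm),
    graphPoint, graphPoint, sub_smul, sub_smul]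
  abel

theorem inner_graphPoint {w v : E} (hw : ‖w‖ = 1) (hvw : ⟪v, w⟫ = 0) (F : ℝ → ℝ) (s : ℝ) :
    ⟪graphPoint w v F s, w⟫ = s := by
  rw [graphPoint, inner_add_left, real_inner_smul_left, real_inner_smul_left,
    real_inner_self_eq_norm_sq, hw, hvw]
  ring

theorem LipschitzWith.abs_slope_le {K : NNReal} {F : ℝ → ℝ} (hF : LipschitzWith K F) (x y : ℝ) :
    |slope F x y| ≤ K := by
  rcases eq_or_ne x y with rfl | hxy
  · simp
  rw [slope_def_field, abs_div, div_le_iff₀ (abs_pos.2 (sub_ne_zero.2 hxy.symm))]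
  simpa [Real.dist_eq] using hF.dist_le_mul y x

theorem downwardSlopeVariation_le_mul_turnSum {v w : E} (hv : ‖v‖ = 1) (hw : ‖w‖ = 1)
    (hvw : ⟪v, w⟫ = 0) {F : ℝ → ℝ} {L : ℝ} (hF : ∀ x y, |slope F x y| ≤ L) {l : List ℝ}
    (hl : l.IsChain (· < ·)) :
    downwardSlopeVariation F l ≤ (1 + L ^ 2) * turnSum (l.map (graphPoint w v F)) := by
  rw [turnSum, tripleSum_map, ← tripleSum_const_mul]
  refine tripleSum_le_tripleSum (fun x y z hxy hyz => ?_) hl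
  rw [graphPoint_sub_graphPoint, graphPoint_sub_graphPoint,
    angle_smul_left_of_pos _ _ (sub_pos.2 hxy), angle_smul_right_of_pos _ _ (sub_pos.2 hyz),
    angle_add_smul_add_smul hv hw hvw]
  exact max_le ((le_abs_self _).trans (abs_sub_le_mul_abs_arctan_sub (hF x y) (hF y z)))
    (by positivity)

section InscribedPolygon

variable {γ : ℝ → E} {a b C : ℝ}
  (hC : ∀ ts : List ℝ, ts.IsChain (· < ·) → (∀ t ∈ ts, t ∈ Icc a b) →
    ts.IsChain (γ · ≠ γ ·) → turnSum (ts.map γ) ≤ C)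
include hC

theorem turnSum_map_le_of_isChain_map {P : ℝ → E} (hP : P.Injective) {T : ℝ → ℝ} {l : List ℝ}
    (hT : ∀ s ∈ l, T s ∈ Icc a b ∧ γ (T s) = P s) (hl : (l.map T).IsChain (· < ·)) :
    turnSum (l.map P) ≤ C := by
  have hmap : l.map P = (l.map T).map γ := by
    rw [map_map]
    exact map_congr_left fun s hs => (hT s hs).2.symm
  rw [hmap]
  refine hC _ hl ?_ ?_
  · simp only [mem_map]
    rintro t ⟨s, hs, rfl⟩
    exact (hT s hs).1
  · rw [← isChain_map γ, ← hmap, isChain_map]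
    rw [isChain_map] at hl
    exact hl.imp fun s s' hss' hPs => hss'.ne (congrArg T (hP hPs))

/-- With `φ = ⟪γ ·, w⟫`, points of the graph are first reached by the curve in increasing order
beyond `φ a` and in decreasing order below it, so each side is a polygon inscribed in the curve. -/
theorem turnSum_map_le_of_image_eq {P : ℝ → E} {w : E} {c d : ℝ}
    (hγ : ContinuousOn γ (Icc a b)) (hP : ∀ s, ⟪P s, w⟫ = s)
    (himg : γ '' Icc a b = P '' Icc c d) {l : List ℝ} (hl : l.IsChain (· < ·))
    (hlcd : ∀ s ∈ l, s ∈ Icc c d) :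
    turnSum (l.map P) ≤ C + C + 2 * π := by
  set φ : ℝ → ℝ := fun t => ⟪γ t, w⟫
  have hφ : ContinuousOn φ (Icc a b) := hγ.inner continuousOn_const
  have hφimg : φ '' Icc a b = Icc c d := by
    rw [show φ = (⟪·, w⟫) ∘ γ from rfl, image_comp, himg, image_image]
    simp [hP]
  have hγP : ∀ t ∈ Icc a b, γ t = P (φ t) := by
    intro t ht
    obtain ⟨s, -, hs⟩ := himg ▸ mem_image_of_mem γ ht
    simp only [φ, ← hs, hP]
  have hT : ∀ s ∈ l, firstHit φ a b s ∈ Icc a b ∧ γ (firstHit φ a b s) = P s := by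
    intro s hs
    obtain ⟨hTab, hTs⟩ := firstHit_mem hφ (hφimg.symm ▸ hlcd s hs)
    exact ⟨hTab, (hγP _ hTab).trans (congrArg P hTs)⟩
  have hPinj : P.Injective := fun s s' h => by rw [← hP s, ← hP s', h]
  rw [← hl.filter_le_append_filter_lt (φ a), map_append]
  refine (turnSum_append_le _ _).trans (add_le_add_three ?_ ?_ le_rfl)
  · rw [← turnSum_reverse, ← map_reverse]
    refine turnSum_map_le_of_isChain_map hC hPinj
      (fun s hs => hT s (mem_filter.1 (mem_reverse.1 hs)).1) ?_
    rw [isChain_map, isChain_reverse]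
    refine (hl.sublist filter_sublist).imp_of_mem_imp fun s s' hs hs' hss' => ?_
    simp only [mem_filter, decide_eq_true_eq] at hs hs'
    exact firstHit_lt_firstHit_of_lt hφ hs'.2 hss' (hφimg.symm ▸ hlcd s hs.1)
  · refine turnSum_map_le_of_isChain_map hC hPinj (fun s hs => hT s (mem_filter.1 hs).1) ?_
    rw [isChain_map]
    refine (hl.sublist filter_sublist).imp_of_mem_imp fun s s' hs hs' hss' => ?_
    simp only [mem_filter, decide_eq_true_eq] at hs hs'
    exact firstHit_lt_firstHit hφ hs.2.le hss' (hφimg.symm ▸ hlcd s' hs'.1)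

end InscribedPolygon

theorem turnSum_map_graphPoint_eq_zero {w v : E} (hw : w ≠ 0) {F : ℝ → ℝ} {l : List ℝ}
    (hl : l.IsChain (· < ·)) (hF : ∀ s ∈ l, ∀ t ∈ l, F s = F t) :
    turnSum (l.map (graphPoint w v F)) = 0 := by
  rw [turnSum, tripleSum_map]
  refine tripleSum_eq_zero (R := fun s t => s < t ∧ F s = F t) (fun x y z hxy hyz => ?_)
    (hl.imp_of_mem_imp fun s t hs ht hst => ⟨hst, hF s hs t ht⟩)
  have hslope : ∀ {s t}, F s = F t → slope F s t = 0 := fun h => by simp [slope_def_field, h]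
  rw [graphPoint_sub_graphPoint, graphPoint_sub_graphPoint, hslope hxy.2, hslope hyz.2,
    zero_smul, add_zero, angle_smul_left_of_pos _ _ (sub_pos.2 hxy.1),
    angle_smul_right_of_pos _ _ (sub_pos.2 hyz.1), angle_self hw]

/-- Outside `[c, d]` the graph of a function that is constant there consists of two collinear
rays, so cutting a chain at `c` and at `d` adds at most `4 * π` to the turn of the graph polygon. -/
theorem turnSum_map_graphPoint_le {w v : E} (hw : w ≠ 0) {F : ℝ → ℝ} {c d K : ℝ}
    (hFc : ∀ s ≤ c, F s = F c) (hFd : ∀ s, d ≤ s → F s = F d)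
    (hK : ∀ l : List ℝ, l.IsChain (· < ·) → (∀ s ∈ l, s ∈ Icc c d) →
      turnSum (l.map (graphPoint w v F)) ≤ K)
    {l : List ℝ} (hl : l.IsChain (· < ·)) :
    turnSum (l.map (graphPoint w v F)) ≤ K + 4 * π := by
  have hl' : (l.filter (c < ·)).IsChain (· < ·) := hl.sublist filter_sublist
  have hsplit : l = l.filter (· ≤ c) ++
      ((l.filter (c < ·)).filter (· ≤ d) ++ (l.filter (c < ·)).filter (d < ·)) := by
    rw [hl'.filter_le_append_filter_lt d, hl.filter_le_append_filter_lt c]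
  conv_lhs => rw [hsplit, map_append, map_append]
  have hlow := turnSum_map_graphPoint_eq_zero (v := v) (l := l.filter (· ≤ c)) hw
    (hl.sublist filter_sublist) (F := F) fun s hs t ht => by
      simp only [mem_filter, decide_eq_true_eq] at hs ht
      rw [hFc s hs.2, hFc t ht.2]
  have hhigh := turnSum_map_graphPoint_eq_zero (v := v)
    (l := (l.filter (c < ·)).filter (d < ·)) hw (hl'.sublist filter_sublist) (F := F)
    fun s hs t ht => by
      simp only [mem_filter, decide_eq_true_eq] at hs ht
      rw [hFd s hs.2.le, hFd t ht.2.le]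
  have hmid := hK ((l.filter (c < ·)).filter (· ≤ d)) (hl'.sublist filter_sublist) fun s hs => by
    simp only [mem_filter, decide_eq_true_eq] at hs
    exact ⟨hs.1.2.le, hs.2⟩
  linarith [turnSum_append_le ((l.filter (· ≤ c)).map (graphPoint w v F))
    (((l.filter (c < ·)).filter (· ≤ d)).map (graphPoint w v F) ++
      ((l.filter (c < ·)).filter (d < ·)).map (graphPoint w v F)),
    turnSum_append_le (((l.filter (c < ·)).filter (· ≤ d)).map (graphPoint w v F))
      (((l.filter (c < ·)).filter (d < ·)).map (graphPoint w v F))]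

theorem downwardSlopeVariation_le_of_image_eq_graphPoint {γ : ℝ → E} {v w : E} {F : ℝ → ℝ}
    {a b c d C L : ℝ} (hv : ‖v‖ = 1) (hw : ‖w‖ = 1) (hvw : ⟪v, w⟫ = 0)
    (hγ : ContinuousOn γ (Icc a b))
    (hC : ∀ ts : List ℝ, ts.IsChain (· < ·) → (∀ t ∈ ts, t ∈ Icc a b) →
      ts.IsChain (γ · ≠ γ ·) → turnSum (ts.map γ) ≤ C)
    (himg : γ '' Icc a b = graphPoint w v F '' Icc c d) (hF : ∀ x y, |slope F x y| ≤ L)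
    (hFc : ∀ s ≤ c, F s = F c) (hFd : ∀ s, d ≤ s → F s = F d) {l : List ℝ}
    (hl : l.IsChain (· < ·)) :
    downwardSlopeVariation F l ≤ (1 + L ^ 2) * (C + C + 2 * π + 4 * π) := by
  have hturn := turnSum_map_graphPoint_le (norm_ne_zero_iff.1 (hw ▸ one_ne_zero)) hFc hFd
    (fun l hl hlcd => turnSum_map_le_of_image_eq hC hγ (inner_graphPoint hw hvw F) himg hl hlcd) hl
  exact (downwardSlopeVariation_le_mul_turnSum hv hw hvw hF hl).trans
    (mul_le_mul_of_nonneg_left hturn (by positivity))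

theorem exists_graphPoint_Icc {v w : E} (hw : ‖w‖ = 1) (hvw : ⟪v, w⟫ = 0) {K M : Set E}
    {f : E → ℝ} {L : ℝ} (hL : 0 ≤ L) (hK : ∀ t ∈ K, t = ⟪t, w⟫ • w)
    (hf : ∀ s ∈ K, ∀ t ∈ K, |f s - f t| ≤ L * ‖s - t‖) (hM : M = (fun t => t + f t • v) '' K)
    (hMc : IsCompact M) (hMconn : IsConnected M) :
    ∃ c d F, c ≤ d ∧ LipschitzWith L.toNNReal F ∧ (∀ s ≤ c, F s = F c) ∧
      (∀ s, d ≤ s → F s = F d) ∧ M = graphPoint w v F '' Icc c d := by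
  have hcont : Continuous (⟪·, w⟫ : E → ℝ) := continuous_id.inner continuous_const
  have hSconn := hMconn.image _ hcont.continuousOn
  have hS := eq_Icc_of_connected_compact hSconn (hMc.image hcont)
  set c := sInf ((⟪·, w⟫) '' M)
  set d := sSup ((⟪·, w⟫) '' M)
  have hcd : c ≤ d := by
    obtain ⟨s, hs⟩ := hSconn.nonempty
    rw [hS] at hs
    exact hs.1.trans hs.2
  have hinner : ∀ t, ⟪t + f t • v, w⟫ = ⟪t, w⟫ := fun t => by
    rw [inner_add_left, real_inner_smul_left, hvw, mul_zero, add_zero]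
  have hmem : ∀ t ∈ K, ⟪t, w⟫ ∈ Icc c d := fun t ht => hS ▸ ⟨_, hM ▸ ⟨t, ht, rfl⟩, hinner t⟩
  have hSK : ∀ s ∈ Icc c d, s • w ∈ K := by
    intro s hs
    rw [← hS, hM] at hs
    obtain ⟨_, ⟨t, ht, rfl⟩, rfl⟩ := hs
    simp only [hinner, ← hK t ht]
    exact ht
  set F := IccExtend hcd fun s => f ((s : ℝ) • w)
  refine ⟨c, d, F, hcd, LipschitzWith.of_dist_le_mul fun x y => ?_, fun s hs => ?_,
    fun s hs => ?_, ?_⟩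
  · rw [Real.coe_toNNReal _ hL, Real.dist_eq, Real.dist_eq]
    calc |F x - F y| ≤ L * ‖(projIcc c d hcd x : ℝ) • w - (projIcc c d hcd y : ℝ) • w‖ :=
          hf _ (hSK _ (projIcc c d hcd x).2) _ (hSK _ (projIcc c d hcd y).2)
      _ = L * |(projIcc c d hcd x : ℝ) - projIcc c d hcd y| := by
          rw [← sub_smul, norm_smul, hw, mul_one, Real.norm_eq_abs]
      _ ≤ L * |x - y| := mul_le_mul_of_nonneg_left (abs_projIcc_sub_projIcc hcd) hL
  · simp only [F, IccExtend_of_le_left hcd _ hs, IccExtend_of_le_left hcd _ le_rfl]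
  · simp only [F, IccExtend_of_right_le hcd _ hs, IccExtend_of_right_le hcd _ le_rfl]
  · rw [hM]
    ext x
    constructor
    · rintro ⟨t, ht, rfl⟩
      refine ⟨⟪t, w⟫, hmem t ht, ?_⟩
      simp only [graphPoint, F, IccExtend_of_mem hcd _ (hmem t ht), ← hK t ht]
    · rintro ⟨s, hs, rfl⟩
      exact ⟨s • w, hSK s hs, by simp only [graphPoint, F, IccExtend_of_mem hcd _ hs]⟩

end InnerProductSpace

theorem HasFiniteTurn.exists_turnSum_lt {γ : ℝ → EuclideanSpace ℝ (Fin 2)} {a b : ℝ}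
    (h : HasFiniteTurn γ a b) :
    ∃ C, ∀ ts : List ℝ, ts.IsChain (· < ·) → ts.IsChain (γ · ≠ γ ·) →
      ts.head? = some a → ts.getLast? = some b → turnSum (ts.map γ) < C := by
  obtain ⟨C, hC⟩ := h
  refine ⟨C, ?_⟩
  rintro (_ | ⟨t, ts⟩) hts hne ha hb
  · simp at ha
  have hget : ∀ k (hk : k < ts.length + 1), (t :: ts).getD k 0 = (t :: ts)[k] :=
    fun k hk => getD_eq_getElem _ _ hk
  convert hC ts.length (fun i => (t :: ts).getD i 0) ?_ ?_ ?_ ?_ using 1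
  · rw [turnSum, tripleSum_eq_sum_range (γ 0), length_map]
    refine Finset.sum_congr (by simp) fun k _ => ?_
    simp only [getD_map, angle_inv_norm_smul_inv_norm_smul]
  · simpa using ha
  · rw [getD_eq_getElem?_getD, show ts.length = (t :: ts).length - 1 by simp,
      ← getLast?_eq_getElem?, hb, Option.getD_some]
  · intro k hk
    rw [hget k (by omega), hget (k + 1) (by omega)]
    exact isChain_iff_getElem.1 hts k (by simp only [length_cons]; omega)
  · intro k hk
    rw [hget k (by omega), hget (k + 1) (by omega)]
    exact (isChain_iff_getElem.1 hne k (by simp only [length_cons]; omega)).symm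

theorem HasFiniteTurn.exists_turnSum_le {γ : ℝ → EuclideanSpace ℝ (Fin 2)} {a b : ℝ}
    (h : HasFiniteTurn γ a b) :
    ∃ C, ∀ ts : List ℝ, ts.IsChain (· < ·) → (∀ t ∈ ts, t ∈ Icc a b) →
      ts.IsChain (γ · ≠ γ ·) → turnSum (ts.map γ) ≤ C := by
  obtain ⟨C, hC⟩ := h.exists_turnSum_lt
  refine ⟨max C 0, fun ts hts hmem hne => ?_⟩
  match ts, hts, hmem, hne with
  | [], _, _, _ | [_], _, _, _ => simp [turnSum]
  | t₀ :: t₁ :: l, hts, hmem, hne =>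
    obtain ⟨r, hr, hrmem, hrne, hrlast, hle⟩ :=
      exists_cons_turnSum_ge (γ := γ) (a := a) (b := b) (by simp) hts hmem hne
    have hrlen : 2 ≤ (a :: r).length := by
      have : r ≠ [] := by
        rintro rfl
        exact cons_ne_nil _ _ (getLast?_eq_none_iff.1 hrlast.symm)
      simpa [Nat.one_le_iff_ne_zero] using this
    obtain ⟨r', hr', -, hr'ne, hr'head, hle'⟩ :=
      exists_append_turnSum_ge (γ := γ) hrlen hr hrmem hrne
    have hr'a : (r' ++ [b]).head? = some a := by
      rcases r' with _ | ⟨x, r'⟩ <;> simp_all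
    exact hle.trans (hle'.trans ((hC _ hr' hr'ne hr'a getLast?_concat).le.trans
      (le_max_left _ _)))

theorem exists_orthonormal_fin_two {v : EuclideanSpace ℝ (Fin 2)} (hv : ‖v‖ = 1) :
    ∃ w : EuclideanSpace ℝ (Fin 2), ‖w‖ = 1 ∧ ⟪v, w⟫ = 0 ∧ ∀ x, ⟪x, v⟫ = 0 → x = ⟪x, w⟫ • w := by
  have hinner : ∀ x y : EuclideanSpace ℝ (Fin 2), ⟪x, y⟫ = x 0 * y 0 + x 1 * y 1 := by
    intro x y
    simp only [PiLp.inner_apply, RCLike.inner_apply, ringHom_apply, Fin.sum_univ_two, Fin.isValue]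
    ring
  have hnorm : ∀ x : EuclideanSpace ℝ (Fin 2), ‖x‖ ^ 2 = x 0 ^ 2 + x 1 ^ 2 := by
    intro x
    simp [EuclideanSpace.real_norm_sq_eq, Fin.sum_univ_two]
  have hv2 : v 0 ^ 2 + v 1 ^ 2 = 1 := by rw [← hnorm, hv, one_pow]
  refine ⟨!₂[-v 1, v 0], ?_, ?_, fun x hx => ?_⟩
  · rw [← sq_eq_sq₀ (norm_nonneg _) zero_le_one, hnorm]
    simp only [Fin.isValue, Matrix.cons_val_zero, even_two, Even.neg_pow, Matrix.cons_val_one,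
      Matrix.cons_val_fin_one, one_pow]
    linarith
  · rw [hinner]
    simp only [Fin.isValue, Matrix.cons_val_zero, mul_neg, Matrix.cons_val_one,
      Matrix.cons_val_fin_one]
    ring
  · rw [hinner] at hx
    ext i
    fin_cases i <;>
      simp only [Fin.zero_eta, Fin.mk_one, Fin.isValue, hinner, Matrix.cons_val_zero, mul_neg,
        Matrix.cons_val_one, Matrix.cons_val_fin_one, PiLp.smul_apply, smul_eq_mul]
    · linear_combination (-x 0) * hv2 + v 0 * hx
    · linear_combination (-x 1) * hv2 + v 1 * hx

/-- If `γ : [a,b] → ℝ²` is a continuous curve of finite turn whose image is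
a Lipschitz graph, then its image is a DC graph. -/
theorem image_of_finite_turn_curve_is_DC_graph
    (a b : ℝ) (hab : a ≤ b) (γ : ℝ → EuclideanSpace ℝ (Fin 2))
    (hcont : ContinuousOn γ (Icc a b))
    (hturn : HasFiniteTurn γ a b)
    (hLip : ∃ L : ℝ, 0 < L ∧ ∃ v : EuclideanSpace ℝ (Fin 2), ‖v‖ = 1 ∧
      IsLipschitzGraphInDir L v (γ '' Icc a b)) :
    IsDCGraph (γ '' Icc a b) := by
  obtain ⟨C, hC⟩ := hturn.exists_turnSum_le
  obtain ⟨L, hL, v, hv, K, f, -, -, hKv, hf, hM⟩ := hLip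
  obtain ⟨w, hw, hvw, hKw⟩ := exists_orthonormal_fin_two hv
  obtain ⟨c, d, F, hcd, hF, hFc, hFd, himg⟩ := exists_graphPoint_Icc hw hvw hL.le
    (fun t ht => hKw t (hKv t ht)) hf hM (isCompact_Icc.image_of_continuousOn hcont)
    ((isConnected_Icc hab).image γ hcont)
  have hslope : ∀ x y, |slope F x y| ≤ L := fun x y => by
    simpa [Real.coe_toNNReal _ hL.le] using hF.abs_slope_le x y
  obtain ⟨g, h, hg, hh, hgh⟩ := exists_convexOn_sub_eq_of_downwardSlopeVariation_le
    (c := c - 1) (d := d + 1) fun l hl _ =>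
      downwardSlopeVariation_le_of_image_eq_graphPoint hv hw hvw hcont hC himg hslope hFc hFd hl
  refine ⟨v, w, hv, hw, hvw, Icc c d, Ioo (c - 1) (d + 1), isClosed_Icc, convex_Icc c d,
    isOpen_Ioo, convex_Ioo _ _, Icc_subset_Ioo (by linarith) (by linarith), g, h,
    hg.subset Ioo_subset_Icc_self (convex_Ioo _ _), hh.subset Ioo_subset_Icc_self (convex_Ioo _ _),
    ?_⟩
  rw [himg, ← hgh]
  rfl
end

section
/- Let r > 0 and let f₁, …, f_n : (−r, r) → ℝ be DC functions. Then there exist DC functions g₁, …, g_n : (−r, r) → ℝ such that g_i ≤ g_{i+1} on (−r, r) for every i = 1, …, n−1, and such that ⋃_{i=1}^n graph(f_i) = ⋃_{i=1}^n graph(g_i). -/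
/-!
DC functions on a set are closed under pointwise `max` and `min`, since
`max (a - b) (c - d) = max (a + d) (c + b) - (b + d)` and dually for `min`. Insertion sort,
run as a sorting network of compare-exchanges `(f, h) ↦ (f ⊓ h, f ⊔ h)` on the functions
themselves, therefore produces DC functions, and at every point it sorts the values while
permuting them, so the union of the graphs is unchanged.
-/

open Set

/-- `f` is DC on the set `I`: it is the difference of two functions convex on `I`. -/
def IsDCOn (f : ℝ → ℝ) (I : Set ℝ) : Prop :=
  ∃ g h : ℝ → ℝ, ConvexOn ℝ I g ∧ ConvexOn ℝ I h ∧ ∀ x ∈ I, f x = g x - h x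

namespace IsDCOn

variable {f g : ℝ → ℝ} {I : Set ℝ}

theorem sup (hf : IsDCOn f I) (hg : IsDCOn g I) : IsDCOn (f ⊔ g) I := by
  obtain ⟨a, b, ha, hb, hab⟩ := hf
  obtain ⟨c, d, hc, hd, hcd⟩ := hg
  refine ⟨(a + d) ⊔ (c + b), b + d, (ha.add hd).sup (hc.add hb), hb.add hd, fun x hx => ?_⟩
  simp only [Pi.sup_apply, Pi.add_apply, hab x hx, hcd x hx]
  rcases le_total (a x - b x) (c x - d x) with h | h
  · rw [sup_of_le_right h, sup_of_le_right (by linarith)]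
    ring
  · rw [sup_of_le_left h, sup_of_le_left (by linarith)]
    ring

theorem inf (hf : IsDCOn f I) (hg : IsDCOn g I) : IsDCOn (f ⊓ g) I := by
  obtain ⟨a, b, ha, hb, hab⟩ := hf
  obtain ⟨c, d, hc, hd, hcd⟩ := hg
  refine ⟨a + c, (a + d) ⊔ (c + b), ha.add hc, (ha.add hd).sup (hc.add hb), fun x hx => ?_⟩
  simp only [Pi.inf_apply, Pi.sup_apply, Pi.add_apply, hab x hx, hcd x hx]
  rcases le_total (a x - b x) (c x - d x) with h | h
  · rw [inf_of_le_left h, sup_of_le_right (by linarith)]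
    ring
  · rw [inf_of_le_right h, sup_of_le_left (by linarith)]
    ring

end IsDCOn

section PointwiseSort

variable {α β : Type*} [LinearOrder β]

def insertPointwise (f : α → β) : List (α → β) → List (α → β)
  | [] => [f]
  | h :: t => (f ⊓ h) :: insertPointwise (f ⊔ h) t

def sortPointwise (l : List (α → β)) : List (α → β) := l.foldr insertPointwise []

theorem length_insertPointwise (f : α → β) (l : List (α → β)) :
    (insertPointwise f l).length = l.length + 1 := by
  induction l generalizing f with
  | nil => rfl
  | cons h t ih => simp [insertPointwise, ih]

theorem length_sortPointwise (l : List (α → β)) : (sortPointwise l).length = l.length := by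
  induction l with
  | nil => rfl
  | cons h t ih => exact (length_insertPointwise h _).trans (congrArg (· + 1) ih)

theorem forall_mem_insertPointwise {P : (α → β) → Prop}
    (hinf : ∀ f g, P f → P g → P (f ⊓ g)) (hsup : ∀ f g, P f → P g → P (f ⊔ g))
    {f : α → β} {l : List (α → β)} (hf : P f)
    (hl : ∀ g ∈ l, P g) : ∀ g ∈ insertPointwise f l, P g := by
  induction l generalizing f with
  | nil => simpa [insertPointwise] using hf
  | cons h t ih =>
    simp only [List.forall_mem_cons] at hl
    simp only [insertPointwise, List.forall_mem_cons]
    exact ⟨hinf f h hf hl.1, ih (hsup f h hf hl.1) hl.2⟩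

theorem forall_mem_sortPointwise {P : (α → β) → Prop}
    (hinf : ∀ f g, P f → P g → P (f ⊓ g)) (hsup : ∀ f g, P f → P g → P (f ⊔ g))
    {l : List (α → β)} (hl : ∀ g ∈ l, P g) :
    ∀ g ∈ sortPointwise l, P g := by
  induction l with
  | nil => simp [sortPointwise]
  | cons h t ih =>
    simp only [List.forall_mem_cons] at hl
    exact forall_mem_insertPointwise hinf hsup hl.1 (ih hl.2)

theorem map_insertPointwise_perm (f : α → β) (l : List (α → β)) (x : α) :
    ((insertPointwise f l).map (· x)).Perm (f x :: l.map (· x)) := by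
  induction l generalizing f with
  | nil => simp [insertPointwise]
  | cons h t ih =>
    simp only [insertPointwise, List.map_cons]
    refine ((ih (f ⊔ h)).cons _).trans ?_
    rcases le_total (f x) (h x) with hle | hle
    · simp [hle]
    · simpa [hle] using List.Perm.swap _ _ _

theorem map_sortPointwise_perm (l : List (α → β)) (x : α) :
    ((sortPointwise l).map (· x)).Perm (l.map (· x)) := by
  induction l with
  | nil => rfl
  | cons h t ih => exact (map_insertPointwise_perm h _ x).trans (ih.cons _)

theorem pairwise_map_insertPointwise (f : α → β) {l : List (α → β)} {x : α}
    (hl : (l.map (· x)).Pairwise (· ≤ ·)) :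
    ((insertPointwise f l).map (· x)).Pairwise (· ≤ ·) := by
  induction l generalizing f with
  | nil => simp [insertPointwise]
  | cons h t ih =>
    rw [List.map_cons, List.pairwise_cons] at hl
    simp only [insertPointwise, List.map_cons, List.pairwise_cons]
    refine ⟨fun b hb => ?_, ih _ hl.2⟩
    rcases List.mem_cons.mp ((map_insertPointwise_perm _ t x).mem_iff.mp hb) with rfl | hb
    · exact inf_le_sup
    · exact inf_le_right.trans (hl.1 b hb)

theorem sortedLE_map_sortPointwise (l : List (α → β)) (x : α) :
    ((sortPointwise l).map (· x)).SortedLE := by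
  rw [List.sortedLE_iff_pairwise]
  induction l with
  | nil => simp [sortPointwise]
  | cons h t ih => exact pairwise_map_insertPointwise h ih

theorem exists_monotone_pointwise_of_inf_sup_closed {P : (α → β) → Prop}
    (hinf : ∀ f g, P f → P g → P (f ⊓ g)) (hsup : ∀ f g, P f → P g → P (f ⊔ g))
    {n : ℕ} (f : Fin n → α → β) (hf : ∀ i, P (f i)) :
    ∃ g : Fin n → α → β, (∀ i, P (g i)) ∧ (∀ x, Monotone (g · x)) ∧
      ∀ x, range (f · x) = range (g · x) := by
  obtain ⟨g, hg⟩ : ∃ g : Fin n → α → β, List.ofFn g = sortPointwise (List.ofFn f) := by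
    have hlen := (length_sortPointwise (List.ofFn f)).trans (List.length_ofFn (f := f))
    generalize sortPointwise (List.ofFn f) = L at hlen ⊢
    subst hlen
    exact ⟨_, List.ofFn_get _⟩
  have hmap (x : α) : (List.ofFn g).map (· x) = List.ofFn (g · x) := List.map_ofFn ..
  refine ⟨g, List.forall_mem_ofFn_iff.mp ?_, fun x => ?_, fun x => ?_⟩
  · rw [hg]
    exact forall_mem_sortPointwise hinf hsup (List.forall_mem_ofFn_iff.mpr hf)
  · rw [← List.sortedLE_ofFn_iff, ← hmap, hg]
    exact sortedLE_map_sortPointwise _ x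
  · ext y
    rw [← List.mem_ofFn', ← List.mem_ofFn', ← hmap, hg, (map_sortPointwise_perm _ x).mem_iff,
      List.map_ofFn]
    rfl

end PointwiseSort

theorem iUnion_image_graph_eq {ι α β : Type*} (f : ι → α → β) (s : Set α) :
    (⋃ i, (fun x => (x, f i x)) '' s) = {p | p.1 ∈ s ∧ p.2 ∈ range (f · p.1)} := by
  ext ⟨x, y⟩
  simp only [mem_iUnion, mem_image, Prod.mk.injEq, mem_ofPred_eq, mem_range]
  constructor
  · rintro ⟨i, x, hx, rfl, rfl⟩
    exact ⟨hx, i, rfl⟩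
  · rintro ⟨hx, i, rfl⟩
    exact ⟨i, x, hx, rfl, rfl⟩

theorem exists_ordered_DC_functions_with_same_union_of_graphs_general
    (r : ℝ) (n : ℕ) (f : Fin n → ℝ → ℝ)
    (hf : ∀ i, IsDCOn (f i) (Ioo (-r) r)) :
    ∃ g : Fin n → ℝ → ℝ,
      (∀ i, IsDCOn (g i) (Ioo (-r) r)) ∧
      (∀ i j : Fin n, (j : ℕ) = (i : ℕ) + 1 → ∀ x ∈ Ioo (-r) r, g i x ≤ g j x) ∧
      (⋃ i, (fun x => (x, f i x)) '' Ioo (-r) r) =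
        (⋃ i, (fun x => (x, g i x)) '' Ioo (-r) r) := by
  obtain ⟨g, hg, hmono, hrange⟩ := exists_monotone_pointwise_of_inf_sup_closed
    (P := (IsDCOn · (Ioo (-r) r))) (fun _ _ => IsDCOn.inf) (fun _ _ => IsDCOn.sup) f hf
  exact ⟨g, hg, fun i j hij x _ => hmono x (Fin.le_def.mpr (by omega)),
    by simp only [iUnion_image_graph_eq, hrange]⟩

/-- Given DC functions `f 1, …, f n` on `(−r, r)`, there are DC functions
`g 1 ≤ g 2 ≤ ⋯ ≤ g n` on `(−r, r)` with the same union of graphs. -/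
theorem exists_ordered_DC_functions_with_same_union_of_graphs
    (r : ℝ) (hr : 0 < r) (n : ℕ) (f : Fin n → ℝ → ℝ)
    (hf : ∀ i, IsDCOn (f i) (Ioo (-r) r)) :
    ∃ g : Fin n → ℝ → ℝ,
      (∀ i, IsDCOn (g i) (Ioo (-r) r)) ∧
      (∀ i j : Fin n, (j : ℕ) = (i : ℕ) + 1 → ∀ x ∈ Ioo (-r) r, g i x ≤ g j x) ∧
      (⋃ i, (fun x => (x, f i x)) '' Ioo (-r) r) =
        (⋃ i, (fun x => (x, g i x)) '' Ioo (-r) r) :=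
  exists_ordered_DC_functions_with_same_union_of_graphs_general r n f hf
end

section
/- Let a > 0, L > 0, and let g, h : ℝ → ℝ be DC and L-Lipschitz functions with g ≥ h on ℝ. Set M = {(x,y) ∈ ℝ² : 0 ≤ x ≤ a and h(x) ≤ y ≤ g(x)}, and define H : ℝ² → ℝ by H(x,y) = 2L·max{0, x − a, −x} + max{0, y − g(x), h(x) − y}. Then: (i) H is a DC function on ℝ², i.e. the difference of two convex functions on ℝ²; (ii) H ≥ 0 and H⁻¹({0}) = M; (iii) if (x,y) ∉ M and H is differentiable at (x,y), then |∇H(x,y)| ≥ min(1, L). -/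
/-!
Write `H = 2L·P₀(x) + P₁(x, y)`, where `P₀(x)` measures how far `x` lies outside `[0, a]` and
`P₁(x, y)` how far `y` lies outside `[h x, g x]`. Both are maxima of DC functions, hence DC, and
both vanish exactly on the corresponding interval. Off `M` one of them is positive, and then
moving in the right axis direction makes `H` grow linearly: vertically, `P₁` grows at rate `1`
while `P₀` is unchanged; horizontally, `2L·P₀` grows at rate `2L` while `P₁` drops at rate at
most `L`, because `g` and `h` are `L`-Lipschitz. A lower bound on the one-sided slope along a
unit vector bounds the norm of the derivative from below.
-/

open Set Filter Topology

def IsDC {E : Type*} [AddCommGroup E] [Module ℝ E] (f : E → ℝ) : Prop :=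
  ∃ F G : E → ℝ, ConvexOn ℝ univ F ∧ ConvexOn ℝ univ G ∧ f = F - G

section IsDC

variable {E F : Type*} [AddCommGroup E] [Module ℝ E] [AddCommGroup F] [Module ℝ F]
  {f g : E → ℝ}

theorem ConvexOn.isDC (hf : ConvexOn ℝ univ f) : IsDC f :=
  ⟨f, fun _ => 0, hf, convexOn_const 0 convex_univ, by ext; simp⟩

theorem LinearMap.isDC (ℓ : E →ₗ[ℝ] ℝ) : IsDC ℓ := (ℓ.convexOn convex_univ).isDC

theorem isDC_const (c : ℝ) : IsDC fun _ : E => c := (convexOn_const c convex_univ).isDC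

theorem IsDC.add (hf : IsDC f) (hg : IsDC g) : IsDC fun x => f x + g x := by
  obtain ⟨F₁, G₁, hF₁, hG₁, rfl⟩ := hf
  obtain ⟨F₂, G₂, hF₂, hG₂, rfl⟩ := hg
  refine ⟨F₁ + F₂, G₁ + G₂, hF₁.add hF₂, hG₁.add hG₂, ?_⟩
  ext; simp only [Pi.add_apply, Pi.sub_apply]; ring

theorem IsDC.neg (hf : IsDC f) : IsDC fun x => -f x := by
  obtain ⟨F₁, G₁, hF₁, hG₁, rfl⟩ := hf
  exact ⟨G₁, F₁, hG₁, hF₁, by ext; simp⟩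

theorem IsDC.sub (hf : IsDC f) (hg : IsDC g) : IsDC fun x => f x - g x := by
  simpa only [sub_eq_add_neg] using hf.add hg.neg

theorem IsDC.const_mul (hf : IsDC f) (c : ℝ) : IsDC fun x => c * f x := by
  obtain ⟨F₁, G₁, hF₁, hG₁, rfl⟩ := hf
  rcases le_total 0 c with hc | hc
  · exact ⟨c • F₁, c • G₁, hF₁.smul hc, hG₁.smul hc, by ext; simp [mul_sub]⟩
  · refine ⟨(-c) • G₁, (-c) • F₁, hG₁.smul (neg_nonneg.2 hc), hF₁.smul (neg_nonneg.2 hc), ?_⟩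
    ext; simp only [Pi.sub_apply, Pi.smul_apply, smul_eq_mul]; ring

/-- `max (F₁ - G₁) (F₂ - G₂) = max (F₁ + G₂) (F₂ + G₁) - (G₁ + G₂)`. -/
theorem IsDC.max (hf : IsDC f) (hg : IsDC g) : IsDC fun x => max (f x) (g x) := by
  obtain ⟨F₁, G₁, hF₁, hG₁, rfl⟩ := hf
  obtain ⟨F₂, G₂, hF₂, hG₂, rfl⟩ := hg
  refine ⟨(F₁ + G₂) ⊔ (F₂ + G₁), G₁ + G₂, (hF₁.add hG₂).sup (hF₂.add hG₁), hG₁.add hG₂, ?_⟩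
  ext x
  simp only [Pi.sub_apply, Pi.sup_apply, Pi.add_apply, ← max_sub_sub_right]
  congr 1 <;> ring

theorem IsDC.comp_linearMap {f : F → ℝ} (hf : IsDC f) (ℓ : E →ₗ[ℝ] F) :
    IsDC fun x => f (ℓ x) := by
  obtain ⟨F₁, G₁, hF₁, hG₁, rfl⟩ := hf
  exact ⟨F₁ ∘ ℓ, G₁ ∘ ℓ, hF₁.comp_linearMap ℓ, hG₁.comp_linearMap ℓ, rfl⟩

end IsDC

/-- How far `s` lies outside the interval `[α, β]`. -/
def penalty (α β s : ℝ) : ℝ := max 0 (max (s - β) (α - s))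

theorem penalty_nonneg (α β s : ℝ) : 0 ≤ penalty α β s := le_max_left _ _

theorem penalty_eq_zero_iff {α β s : ℝ} : penalty α β s = 0 ↔ α ≤ s ∧ s ≤ β := by
  simp only [penalty, max_eq_left_iff, max_le_iff, sub_nonpos]
  tauto

theorem IsDC.penalty {E : Type*} [AddCommGroup E] [Module ℝ E] {α β s : E → ℝ}
    (hα : IsDC α) (hβ : IsDC β) (hs : IsDC s) : IsDC fun x => penalty (α x) (β x) (s x) :=
  (isDC_const 0).max ((hs.sub hβ).max (hα.sub hs))

theorem exists_sign_penalty_growth {α β s : ℝ} (hs : 0 < penalty α β s) :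
    ∃ σ : ℝ, |σ| = 1 ∧ ∀ t, penalty α β s + t ≤ penalty α β (s + t * σ) := by
  rcases max_choice 0 (max (s - β) (α - s)) with h₀ | h₁
  · exact absurd h₀ hs.ne'
  rcases max_choice (s - β) (α - s) with h | h
  · refine ⟨1, abs_one, fun t => ?_⟩
    calc penalty α β s + t = s + t * 1 - β := by rw [penalty, h₁, h]; ring
      _ ≤ penalty α β (s + t * 1) := le_max_of_le_right (le_max_left _ _)
  · refine ⟨-1, by norm_num, fun t => ?_⟩
    calc penalty α β s + t = α - (s + t * -1) := by rw [penalty, h₁, h]; ring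
      _ ≤ penalty α β (s + t * -1) := le_max_of_le_right (le_max_right _ _)

theorem penalty_le_penalty_add (α β α' β' s : ℝ) :
    penalty α β s ≤ penalty α' β' s + max |α - α'| |β - β'| := by
  have hβ : s - β ≤ penalty α' β' s + max |α - α'| |β - β'| :=
    calc s - β ≤ (s - β') + |β - β'| := by linarith [neg_abs_le (β - β')]
      _ ≤ _ := add_le_add (le_max_of_le_right (le_max_left _ _)) (le_max_right _ _)
  have hα : α - s ≤ penalty α' β' s + max |α - α'| |β - β'| :=
    calc α - s ≤ (α' - s) + |α - α'| := by linarith [le_abs_self (α - α')]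
      _ ≤ _ := add_le_add (le_max_of_le_right (le_max_right _ _)) (le_max_left _ _)
  exact max_le (add_nonneg (penalty_nonneg _ _ _) (le_max_of_le_left (abs_nonneg _)))
    (max_le hβ hα)

theorem le_norm_fderiv_of_growth {E : Type*} [NormedAddCommGroup E] [NormedSpace ℝ E]
    {f : E → ℝ} {p v : E} {m : ℝ} (hf : DifferentiableAt ℝ f p) (hv : ‖v‖ ≤ 1)
    (hgrowth : ∀ᶠ t in 𝓝[>] 0, f p + m * t ≤ f (p + t • v)) : m ≤ ‖fderiv ℝ f p‖ := by
  have hslope :=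
    (hf.hasFDerivAt.hasLineDerivAt v).tendsto_slope_zero.mono_left (nhdsGT_le_nhdsNE 0)
  have hm : m ≤ fderiv ℝ f p v := by
    refine ge_of_tendsto hslope ?_
    filter_upwards [hgrowth, self_mem_nhdsWithin] with t ht (htpos : 0 < t)
    rw [smul_eq_mul, le_inv_mul_iff₀ htpos]
    linarith
  calc m ≤ fderiv ℝ f p v := hm
    _ ≤ ‖fderiv ℝ f p v‖ := le_abs_self _
    _ ≤ ‖fderiv ℝ f p‖ * ‖v‖ := (fderiv ℝ f p).le_opNorm v
    _ ≤ ‖fderiv ℝ f p‖ := mul_le_of_le_one_right (norm_nonneg _) hv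

theorem exists_growth_direction {a L : ℝ} {g h : ℝ → ℝ} {H : EuclideanSpace ℝ (Fin 2) → ℝ}
    (hL : 0 ≤ L) (hgLip : ∀ x y : ℝ, |g x - g y| ≤ L * |x - y|)
    (hhLip : ∀ x y : ℝ, |h x - h y| ≤ L * |x - y|)
    (hH : ∀ p, H p = 2 * L * penalty 0 a (p 0) + penalty (h (p 0)) (g (p 0)) (p 1))
    {p : EuclideanSpace ℝ (Fin 2)} (hp : 0 < H p) :
    ∃ v : EuclideanSpace ℝ (Fin 2), ‖v‖ ≤ 1 ∧ ∀ t ≥ 0, H p + min 1 L * t ≤ H (p + t • v) := by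
  rw [hH] at hp
  by_cases hx : 0 < penalty 0 a (p 0)
  · obtain ⟨σ, hσ, hgrowth⟩ := exists_sign_penalty_growth hx
    refine ⟨EuclideanSpace.single 0 σ, by simp [hσ], fun t ht => ?_⟩
    have hshift := penalty_le_penalty_add (h (p 0)) (g (p 0))
      (h (p 0 + t * σ)) (g (p 0 + t * σ)) (p 1)
    have hlip : max |h (p 0) - h (p 0 + t * σ)| |g (p 0) - g (p 0 + t * σ)| ≤ L * t := by
      calc _ ≤ L * |p 0 - (p 0 + t * σ)| := max_le (hhLip _ _) (hgLip _ _)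
        _ = L * t := by rw [sub_add_cancel_left, abs_neg, abs_mul, hσ, mul_one, abs_of_nonneg ht]
    rw [hH, hH]
    simp only [PiLp.add_apply, PiLp.smul_apply, PiLp.single_apply, smul_eq_mul, if_true,
      one_ne_zero, if_false, mul_zero, add_zero]
    nlinarith [hgrowth t, mul_le_mul_of_nonneg_right (min_le_right 1 L) ht]
  · have hx0 : penalty 0 a (p 0) = 0 := le_antisymm (not_lt.1 hx) (penalty_nonneg _ _ _)
    rw [hx0, mul_zero, zero_add] at hp
    obtain ⟨σ, hσ, hgrowth⟩ := exists_sign_penalty_growth hp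
    refine ⟨EuclideanSpace.single 1 σ, by simp [hσ], fun t ht => ?_⟩
    rw [hH, hH]
    simp only [PiLp.add_apply, PiLp.smul_apply, PiLp.single_apply, smul_eq_mul, if_true,
      zero_ne_one, if_false, mul_zero, add_zero]
    nlinarith [hgrowth t, mul_le_mul_of_nonneg_right (min_le_left 1 L) ht]

theorem aura_for_region_between_DC_graphs_general
    (a L : ℝ) (hL : 0 < L) (g h : ℝ → ℝ)
    (hgDC : ∃ g₁ g₂ : ℝ → ℝ, ConvexOn ℝ univ g₁ ∧ ConvexOn ℝ univ g₂ ∧ g = g₁ - g₂)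
    (hhDC : ∃ h₁ h₂ : ℝ → ℝ, ConvexOn ℝ univ h₁ ∧ ConvexOn ℝ univ h₂ ∧ h = h₁ - h₂)
    (hgLip : ∀ x y : ℝ, |g x - g y| ≤ L * |x - y|)
    (hhLip : ∀ x y : ℝ, |h x - h y| ≤ L * |x - y|)
    (M : Set (EuclideanSpace ℝ (Fin 2)))
    (hM : M = {p : EuclideanSpace ℝ (Fin 2) |
      0 ≤ p 0 ∧ p 0 ≤ a ∧ h (p 0) ≤ p 1 ∧ p 1 ≤ g (p 0)})
    (H : EuclideanSpace ℝ (Fin 2) → ℝ)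
    (hH : H = fun p => 2 * L * max 0 (max (p 0 - a) (-(p 0)))
      + max 0 (max (p 1 - g (p 0)) (h (p 0) - p 1))) :
    (∃ F G : EuclideanSpace ℝ (Fin 2) → ℝ,
        ConvexOn ℝ univ F ∧ ConvexOn ℝ univ G ∧ H = F - G) ∧
    ((∀ p, 0 ≤ H p) ∧ H ⁻¹' {0} = M) ∧
    (∀ p, p ∉ M → DifferentiableAt ℝ H p → min 1 L ≤ ‖fderiv ℝ H p‖) := by
  have hH' : ∀ p, H p = 2 * L * penalty 0 a (p 0) + penalty (h (p 0)) (g (p 0)) (p 1) := by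
    simp [hH, penalty]
  have hnonneg : ∀ p, 0 ≤ H p := fun p => by
    rw [hH']
    exact add_nonneg (mul_nonneg (by positivity) (penalty_nonneg _ _ _)) (penalty_nonneg _ _ _)
  have hzero : H ⁻¹' {0} = M := by
    ext p
    rw [hM, mem_preimage, mem_singleton_iff, hH', add_eq_zero_iff_of_nonneg
      (mul_nonneg (by positivity) (penalty_nonneg _ _ _)) (penalty_nonneg _ _ _)]
    simp [hL.ne', penalty_eq_zero_iff, and_assoc]
  refine ⟨?_, ⟨hnonneg, hzero⟩, fun p hpM hd => ?_⟩
  · have hcoord (i : Fin 2) : IsDC fun p : EuclideanSpace ℝ (Fin 2) => p i :=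
      (EuclideanSpace.projₗ i).isDC
    rw [funext hH']
    exact (((isDC_const 0).penalty (isDC_const a) (hcoord 0)).const_mul _).add
      ((IsDC.comp_linearMap hhDC (EuclideanSpace.projₗ 0)).penalty
        (IsDC.comp_linearMap hgDC (EuclideanSpace.projₗ 0)) (hcoord 1))
  · have hp : 0 < H p := (hnonneg p).lt_of_ne fun h0 => hpM (hzero ▸ h0.symm)
    obtain ⟨v, hv, hgrowth⟩ := exists_growth_direction hL.le hgLip hhLip hH' hp
    exact le_norm_fderiv_of_growth hd hv 
      (eventually_nhdsWithin_of_forall fun t ht => hgrowth t (mem_Ioi.1 ht).le)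

/-- Let `a, L > 0` and let `g, h : ℝ → ℝ` be DC, `L`-Lipschitz, with
`g ≥ h`.  Let `M = {(x,y) : 0 ≤ x ≤ a, h x ≤ y ≤ g x}` and
`H (x,y) = 2L·max{0, x−a, −x} + max{0, y − g x, h x − y}`.  Then `H` is DC on `ℝ²`,
`H ≥ 0` with `H⁻¹({0}) = M`, and at every point outside `M` where `H` is differentiable the
norm of its gradient is at least `min 1 L`. -/
theorem aura_for_region_between_DC_graphs
    (a L : ℝ) (ha : 0 < a) (hL : 0 < L) (g h : ℝ → ℝ)
    (hgDC : ∃ g₁ g₂ : ℝ → ℝ, ConvexOn ℝ univ g₁ ∧ ConvexOn ℝ univ g₂ ∧ g = g₁ - g₂)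
    (hhDC : ∃ h₁ h₂ : ℝ → ℝ, ConvexOn ℝ univ h₁ ∧ ConvexOn ℝ univ h₂ ∧ h = h₁ - h₂)
    (hgLip : ∀ x y : ℝ, |g x - g y| ≤ L * |x - y|)
    (hhLip : ∀ x y : ℝ, |h x - h y| ≤ L * |x - y|)
    (hgh : ∀ x : ℝ, h x ≤ g x)
    (M : Set (EuclideanSpace ℝ (Fin 2)))
    (hM : M = {p : EuclideanSpace ℝ (Fin 2) |
      0 ≤ p 0 ∧ p 0 ≤ a ∧ h (p 0) ≤ p 1 ∧ p 1 ≤ g (p 0)})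
    (H : EuclideanSpace ℝ (Fin 2) → ℝ)
    (hH : H = fun p => 2 * L * max 0 (max (p 0 - a) (-(p 0)))
      + max 0 (max (p 1 - g (p 0)) (h (p 0) - p 1))) :
    (∃ F G : EuclideanSpace ℝ (Fin 2) → ℝ,
        ConvexOn ℝ univ F ∧ ConvexOn ℝ univ G ∧ H = F - G) ∧
    ((∀ p, 0 ≤ H p) ∧ H ⁻¹' {0} = M) ∧
    (∀ p, p ∉ M → DifferentiableAt ℝ H p → min 1 L ≤ ‖fderiv ℝ H p‖) :=
  aura_for_region_between_DC_graphs_general a L hL g h hgDC hhDC hgLip hhLip M hM H hH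
end

section
/- Let f : [a,b] → ℝ be of class C² (the restriction of a C² function on an open interval containing [a,b]), and set Λ = ∫_a^b |f''(s)| ds. Define g(x) = ∫_a^x ∫_a^t (f''(s))₊ ds dt, h(x) = ∫_a^x ∫_a^t (f''(s))₋ ds dt, and φ(x) = f'(a)·(x − a) + f(a) for x ∈ [a,b], where (·)₊ and (·)₋ denote the positive and negative parts. Then g and h are convex, Λ-Lipschitz functions on [a,b] with g(a) = h(a) = 0, φ is affine, and f = g − h + φ on [a,b]. -/
/-!
Taylor's formula with integral remainder gives `f x = f a + f' a (x - a) + ∫_a^x ∫_a^t f''`,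
and splitting `f'' = f''₊ - f''₋` splits the double integral as `g - h`. A double primitive of
a nonnegative continuous `F` is convex, because its derivative `t ↦ ∫_a^t F` is monotone, and
it is `(∫_a^b G)`-Lipschitz on `[a,b]` whenever `F ≤ G`, because that derivative is bounded
by `∫_a^b G`.
-/

open Set intervalIntegral MeasureTheory

theorem ContDiffOn.hasDerivAt_deriv {f : ℝ → ℝ} {O : Set ℝ} {n : WithTop ℕ∞}
    (hf : ContDiffOn ℝ n f O) (hO : IsOpen O) (hn : n ≠ 0) {x : ℝ} (hx : x ∈ O) :
    HasDerivAt f (deriv f x) x :=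
  ((hf.differentiableOn hn).differentiableAt (hO.mem_nhds hx)).hasDerivAt

section Primitive

variable {a b : ℝ} {F G : ℝ → ℝ}

theorem uIcc_subset_Icc_of_mem {x : ℝ} (hab : a ≤ b) (hx : x ∈ Icc a b) :
    uIcc a x ⊆ Icc a b :=
  uIcc_subset_Icc (left_mem_Icc.2 hab) hx

theorem continuousOn_primitive_Icc (hab : a ≤ b) (hF : ContinuousOn F (Icc a b)) :
    ContinuousOn (fun x => ∫ t in a..x, F t) (Icc a b) := by
  rw [← uIcc_of_le hab] at hF ⊢
  exact continuousOn_primitive_interval hF.integrableOn_uIcc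

theorem hasDerivAt_primitive_of_mem_Ioo (hF : ContinuousOn F (Icc a b)) {x : ℝ}
    (hx : x ∈ Ioo a b) : HasDerivAt (fun t => ∫ s in a..t, F s) (F x) x :=
  integral_hasDerivAt_right
    (hF.mono (uIcc_subset_Icc_of_mem (hx.1.trans hx.2).le
      (Ioo_subset_Icc_self hx))).intervalIntegrable
    ((hF.mono Ioo_subset_Icc_self).stronglyMeasurableAtFilter isOpen_Ioo x hx)
    (hF.continuousAt (Icc_mem_nhds hx.1 hx.2))

theorem monotoneOn_primitive_of_nonneg (hF : ContinuousOn F (Icc a b))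
    (hF0 : ∀ s ∈ Icc a b, 0 ≤ F s) : MonotoneOn (fun x => ∫ t in a..x, F t) (Icc a b) :=
  fun _ hx _ hy hxy =>
    integral_mono_interval le_rfl hx.1 hxy
      ((ae_restrict_mem measurableSet_Ioc).mono fun s hs => hF0 s ⟨hs.1.le, hs.2.trans hy.2⟩)
      (hF.mono (uIcc_subset_Icc_of_mem (hx.1.trans hx.2) hy)).intervalIntegrable

theorem convexOn_primitive_of_monotoneOn (hab : a ≤ b) (hF : ContinuousOn F (Icc a b))
    (hFm : MonotoneOn F (Icc a b)) : ConvexOn ℝ (Icc a b) (fun x => ∫ t in a..x, F t) := by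
  refine MonotoneOn.convexOn_of_deriv (convex_Icc a b) (continuousOn_primitive_Icc hab hF) ?_ ?_
  · rw [interior_Icc]
    exact fun _ hx =>
      (hasDerivAt_primitive_of_mem_Ioo hF hx).differentiableAt.differentiableWithinAt
  · rw [interior_Icc]
    intro x hx y hy hxy
    rw [(hasDerivAt_primitive_of_mem_Ioo hF hx).deriv,
      (hasDerivAt_primitive_of_mem_Ioo hF hy).deriv]
    exact hFm (Ioo_subset_Icc_self hx) (Ioo_subset_Icc_self hy) hxy

theorem abs_primitive_sub_le (hab : a ≤ b) (hF : ContinuousOn F (Icc a b)) {C : ℝ}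
    (hC : ∀ t ∈ Icc a b, |F t| ≤ C) {x y : ℝ} (hx : x ∈ Icc a b) (hy : y ∈ Icc a b) :
    |(∫ t in a..x, F t) - ∫ t in a..y, F t| ≤ C * |x - y| := by
  rw [integral_interval_sub_left (hF.mono (uIcc_subset_Icc_of_mem hab hx)).intervalIntegrable
    (hF.mono (uIcc_subset_Icc_of_mem hab hy)).intervalIntegrable]
  simpa using norm_integral_le_of_norm_le_const fun t ht =>
    (Real.norm_eq_abs (F t)).trans_le (hC t (uIcc_subset_Icc hy hx (uIoc_subset_uIcc ht)))

theorem abs_primitive_le_integral_of_le (hab : a ≤ b) (hF : ContinuousOn F (Icc a b))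
    (hG : ContinuousOn G (Icc a b)) (hF0 : ∀ s ∈ Icc a b, 0 ≤ F s)
    (hFG : ∀ s ∈ Icc a b, F s ≤ G s) {t : ℝ} (ht : t ∈ Icc a b) :
    |∫ s in a..t, F s| ≤ ∫ s in a..b, G s := by
  have hsub : Icc a t ⊆ Icc a b := Icc_subset_Icc_right ht.2
  calc |∫ s in a..t, F s| = ∫ s in a..t, F s :=
        abs_of_nonneg (integral_nonneg ht.1 fun s hs => hF0 s (hsub hs))
    _ ≤ ∫ s in a..t, G s :=
        integral_mono_on ht.1 (hF.mono (uIcc_subset_Icc_of_mem hab ht)).intervalIntegrable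
          (hG.mono (uIcc_subset_Icc_of_mem hab ht)).intervalIntegrable
          fun s hs => hFG s (hsub hs)
    _ ≤ ∫ s in a..b, G s :=
        integral_mono_interval le_rfl ht.1 ht.2
          ((ae_restrict_mem measurableSet_Ioc).mono fun s hs =>
            (hF0 s (Ioc_subset_Icc_self hs)).trans (hFG s (Ioc_subset_Icc_self hs)))
          (hG.mono (uIcc_subset_Icc_of_mem hab (right_mem_Icc.2 hab))).intervalIntegrable

theorem convexOn_double_primitive_of_nonneg (hab : a ≤ b) (hF : ContinuousOn F (Icc a b))
    (hF0 : ∀ s ∈ Icc a b, 0 ≤ F s) :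
    ConvexOn ℝ (Icc a b) (fun x => ∫ t in a..x, ∫ s in a..t, F s) :=
  convexOn_primitive_of_monotoneOn hab (continuousOn_primitive_Icc hab hF)
    (monotoneOn_primitive_of_nonneg hF hF0)

theorem abs_double_primitive_sub_le (hab : a ≤ b) (hF : ContinuousOn F (Icc a b))
    (hG : ContinuousOn G (Icc a b)) (hF0 : ∀ s ∈ Icc a b, 0 ≤ F s)
    (hFG : ∀ s ∈ Icc a b, F s ≤ G s) {x y : ℝ} (hx : x ∈ Icc a b) (hy : y ∈ Icc a b) :
    |(∫ t in a..x, ∫ s in a..t, F s) - ∫ t in a..y, ∫ s in a..t, F s| ≤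
      (∫ s in a..b, G s) * |x - y| :=
  abs_primitive_sub_le hab (continuousOn_primitive_Icc hab hF)
    (fun _ ht => abs_primitive_le_integral_of_le hab hF hG hF0 hFG ht) hx hy

theorem double_primitive_sub (hab : a ≤ b) (hF : ContinuousOn F (Icc a b))
    (hG : ContinuousOn G (Icc a b)) {x : ℝ} (hx : x ∈ Icc a b) :
    (∫ t in a..x, ∫ s in a..t, F s) - (∫ t in a..x, ∫ s in a..t, G s) =
      ∫ t in a..x, ∫ s in a..t, (F s - G s) := by
  have hsub := uIcc_subset_Icc_of_mem hab hx
  rw [← integral_sub ((continuousOn_primitive_Icc hab hF).mono hsub).intervalIntegrable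
    ((continuousOn_primitive_Icc hab hG).mono hsub).intervalIntegrable]
  refine integral_congr fun t ht => ?_
  have htsub := uIcc_subset_Icc_of_mem hab (hsub ht)
  exact (integral_sub (hF.mono htsub).intervalIntegrable (hG.mono htsub).intervalIntegrable).symm

theorem eq_taylor_integral_remainder (hab : a ≤ b) {f f' f'' : ℝ → ℝ}
    (hf : ∀ x ∈ Icc a b, HasDerivAt f (f' x) x)
    (hf' : ∀ x ∈ Icc a b, HasDerivAt f' (f'' x) x)
    (hf'' : ContinuousOn f'' (Icc a b)) {x : ℝ} (hx : x ∈ Icc a b) :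
    f x = f a + f' a * (x - a) + ∫ t in a..x, ∫ s in a..t, f'' s := by
  have hsub := uIcc_subset_Icc_of_mem hab hx
  have hf'c : ContinuousOn f' (Icc a b) := fun t ht =>
    (hf' t ht).continuousAt.continuousWithinAt
  have hinner : ∀ t ∈ uIcc a x, ∫ s in a..t, f'' s = f' t - f' a := fun t ht =>
    integral_eq_sub_of_hasDerivAt (fun s hs => hf' s (uIcc_subset_Icc_of_mem hab (hsub ht) hs))
      (hf''.mono (uIcc_subset_Icc_of_mem hab (hsub ht))).intervalIntegrable
  rw [integral_congr hinner, integral_sub (hf'c.mono hsub).intervalIntegrable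
    intervalIntegrable_const, integral_eq_sub_of_hasDerivAt (fun t ht => hf t (hsub ht))
    (hf'c.mono hsub).intervalIntegrable, intervalIntegral.integral_const, smul_eq_mul]
  ring

end Primitive

/-- For a `C²` function `f` on `[a,b]` with `Λ = ∫_a^b |f''|`, the functions
`g x = ∫_a^x ∫_a^t (f''(s))₊ ds dt`, `h x = ∫_a^x ∫_a^t (f''(s))₋ ds dt` and
`φ x = f'(a)(x−a) + f(a)` satisfy: `g, h` are convex and `Λ`-Lipschitz on `[a,b]` with
`g a = h a = 0`, `φ` is affine, and `f = g − h + φ` on `[a,b]`. -/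
theorem decomposition_of_C2_function
    (a b : ℝ) (hab : a ≤ b) (f : ℝ → ℝ)
    (hf : ∃ O : Set ℝ, IsOpen O ∧ Icc a b ⊆ O ∧ ContDiffOn ℝ 2 f O)
    (Λ : ℝ) (hΛ : Λ = ∫ s in a..b, |deriv (deriv f) s|)
    (g h φ : ℝ → ℝ)
    (hg : g = fun x => ∫ t in a..x, ∫ s in a..t, max (deriv (deriv f) s) 0)
    (hh : h = fun x => ∫ t in a..x, ∫ s in a..t, max (-(deriv (deriv f) s)) 0)
    (hφ : φ = fun x => deriv f a * (x - a) + f a) :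
    ConvexOn ℝ (Icc a b) g ∧ ConvexOn ℝ (Icc a b) h ∧
    (∀ x ∈ Icc a b, ∀ y ∈ Icc a b, |g x - g y| ≤ Λ * |x - y|) ∧
    (∀ x ∈ Icc a b, ∀ y ∈ Icc a b, |h x - h y| ≤ Λ * |x - y|) ∧
    g a = 0 ∧ h a = 0 ∧
    (∃ c e : ℝ, ∀ x : ℝ, φ x = c * x + e) ∧
    (∀ x ∈ Icc a b, f x = g x - h x + φ x) := by
  obtain ⟨O, hO, hOsub, hf2⟩ := hf
  have hf1 : ContDiffOn ℝ 1 (deriv f) O := hf2.deriv_of_isOpen hO (by norm_num)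
  have hc : ContinuousOn (deriv (deriv f)) (Icc a b) :=
    (hf1.continuousOn_deriv_of_isOpen hO le_rfl).mono hOsub
  have hpos : ContinuousOn (fun s => max (deriv (deriv f) s) 0) (Icc a b) :=
    hc.sup continuousOn_const
  have hneg : ContinuousOn (fun s => max (-deriv (deriv f) s) 0) (Icc a b) :=
    hc.neg.sup continuousOn_const
  subst hg hh hφ hΛ
  refine ⟨convexOn_double_primitive_of_nonneg hab hpos fun _ _ => le_max_right _ _,
    convexOn_double_primitive_of_nonneg hab hneg fun _ _ => le_max_right _ _,
    fun x hx y hy => abs_double_primitive_sub_le hab hpos hc.abs (fun _ _ => le_max_right _ _)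
      (fun _ _ => max_le (le_abs_self _) (abs_nonneg _)) hx hy,
    fun x hx y hy => abs_double_primitive_sub_le hab hneg hc.abs (fun _ _ => le_max_right _ _)
      (fun _ _ => max_le (neg_le_abs _) (abs_nonneg _)) hx hy,
    by simp, by simp, ⟨deriv f a, f a - deriv f a * a, fun x => by ring⟩, fun x hx => ?_⟩
  rw [eq_taylor_integral_remainder hab
    (fun t ht => hf2.hasDerivAt_deriv hO (by norm_num) (hOsub ht))
    (fun t ht => hf1.hasDerivAt_deriv hO one_ne_zero (hOsub ht)) hc hx,
    double_primitive_sub hab hpos hneg hx]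
  simp only [max_zero_sub_max_neg_zero_eq_self]
  ring
end
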